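/- arXiv:2512.04345 — 4 statements merged into one kernel-verified Lean document; each statement's English description precedes it below -/
import Mathlib

section
/- The function Y ↦ Tr[Y₊] on n×n Hermitian complex matrices is 1-Lipschitz with respect to the trace norm: for all Hermitian X and Y, |Tr[X₊] − Tr[Y₊]| ≤ ‖X − Y‖₁. -/
/-!
Common setup: matrices are `n × n` complex matrices. Functions of Hermitian matrices are
taken via the spectral theorem (functional calculus). Matrix-valued integrals are Bochner
integrals (with respect to the entrywise sup norm; all norms on this finite-dimensional
space are equivalent, so the Bochner integral does not depend on this choice), and the
directional derivative `Dlog[B](H) = lim_{t→0} (log(B+tH) - log B)/t` is expressed through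
`HasDerivAt (fun t => mlog (B + t • H)) · 0`, which asserts both the existence of the limit
and its value.
-/

open MeasureTheory
open scoped ComplexOrder

attribute [local instance] Matrix.normedAddCommGroup Matrix.normedSpace

noncomputable section

variable {n : ℕ}

/-- Apply a real function to a Hermitian matrix via the spectral theorem
(junk value `0` if the matrix is not Hermitian). -/
def mfun (f : ℝ → ℝ) (M : Matrix (Fin n) (Fin n) ℂ) : Matrix (Fin n) (Fin n) ℂ :=
  if hM : M.IsHermitian then hM.cfc f else 0

/-- Matrix logarithm via functional calculus. -/
def mlog (M : Matrix (Fin n) (Fin n) ℂ) : Matrix (Fin n) (Fin n) ℂ :=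
  mfun Real.log M

/-- `{H > γ B}`: the orthogonal projection onto the sum of the eigenspaces of `H - γ B`
with strictly positive eigenvalues. -/
def projGt (H B : Matrix (Fin n) (Fin n) ℂ) (γ : ℝ) : Matrix (Fin n) (Fin n) ℂ :=
  mfun (fun x => if 0 < x then 1 else 0) (H - γ • B)

/-- `{H ≤ γ B} := 1 - {H > γ B}`. -/
def projLe (H B : Matrix (Fin n) (Fin n) ℂ) (γ : ℝ) : Matrix (Fin n) (Fin n) ℂ :=
  1 - projGt H B γ

/-- Positive part `M₊ = (√(M²) + M)/2` of a Hermitian matrix. -/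
def mposPart (M : Matrix (Fin n) (Fin n) ℂ) : Matrix (Fin n) (Fin n) ℂ :=
  (2 : ℂ)⁻¹ • (mfun Real.sqrt (M * M) + M)

/-- Quantum hockey-stick divergence `E_γ(A‖B) = Tr[(A - γ B)₊]`. -/
def hsd (γ : ℝ) (A B : Matrix (Fin n) (Fin n) ℂ) : ℝ :=
  ((mposPart (A - γ • B)).trace).re

/-- Umegaki relative entropy `D(A‖B) = Tr[A (log A - log B) + B - A]`, with the convention
`0 log 0 = 0` (the term `A log A` is computed by applying `x ↦ x * log x` to `A`). -/
def relEnt (A B : Matrix (Fin n) (Fin n) ℂ) : ℝ :=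
  ((mfun (fun x => x * Real.log x) A - A * mlog B + B - A).trace).re

/-- Trace norm `‖M‖₁ = Tr √(Mᴴ M)`. -/
def traceNorm (M : Matrix (Fin n) (Fin n) ℂ) : ℝ :=
  ((mfun Real.sqrt (M.conjTranspose * M)).trace).re


section Aux

lemma contOn (A : Matrix (Fin n) (Fin n) ℂ) (f : ℝ → ℝ) :
    ContinuousOn f (spectrum ℝ A) := by
  have : DiscreteTopology (spectrum ℝ A) := inferInstance
  rw [continuousOn_iff_continuous_restrict]
  exact continuous_of_discreteTopology

lemma trace_cfc' (A : Matrix (Fin n) (Fin n) ℂ) (hA : A.IsHermitian) (f : ℝ → ℝ) :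
    (cfc f A).trace = ∑ i, (f (hA.eigenvalues i) : ℂ) := by
  rw [hA.cfc_eq, Matrix.IsHermitian.cfc, Unitary.conjStarAlgAut_apply, Matrix.trace_mul_cycle,
    Unitary.coe_star_mul_self, one_mul, Matrix.trace_diagonal]
  rfl

lemma trace_cfc_re (A : Matrix (Fin n) (Fin n) ℂ) (hA : A.IsHermitian) (f : ℝ → ℝ) :
    ((cfc f A).trace).re = ∑ i, f (hA.eigenvalues i) := by
  rw [trace_cfc' A hA f, Complex.re_sum]
  simp

lemma psd_cfc (A : Matrix (Fin n) (Fin n) ℂ) (hA : A.IsHermitian) (f : ℝ → ℝ)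
    (hf : ∀ x, 0 ≤ f x) : (cfc f A).PosSemidef := by
  rw [hA.cfc_eq, Matrix.IsHermitian.cfc]
  have hd : Matrix.PosSemidef
      (Matrix.diagonal (RCLike.ofReal ∘ f ∘ hA.eigenvalues) : Matrix (Fin n) (Fin n) ℂ) := by
    refine Matrix.PosSemidef.diagonal fun i => ?_
    simpa using Complex.zero_le_real.mpr (hf _)
  simpa [Matrix.star_eq_conjTranspose] using
    hd.mul_mul_conjTranspose_same (hA.eigenvectorUnitary : Matrix (Fin n) (Fin n) ℂ)

lemma re_diag_nonneg (M : Matrix (Fin n) (Fin n) ℂ) (hM : M.PosSemidef) (i : Fin n) :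
    0 ≤ (M i i).re := by
  have h := hM.dotProduct_mulVec_nonneg (Pi.single i 1)
  have heq : dotProduct (star (Pi.single i 1 : Fin n → ℂ)) (M.mulVec (Pi.single i 1)) =
      M i i := by
    simp [Matrix.mulVec_single, Pi.single_apply, dotProduct]
  rw [heq] at h
  exact (Complex.le_def.mp h).1

lemma re_trace_mul_nonneg (A B : Matrix (Fin n) (Fin n) ℂ) (hA : A.PosSemidef)
    (hB : B.PosSemidef) : 0 ≤ ((A * B).trace).re := by
  obtain ⟨C, rfl⟩ : ∃ C : Matrix (Fin n) (Fin n) ℂ, B = C.conjTranspose * C := by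
    open scoped MatrixOrder in exact CStarAlgebra.nonneg_iff_eq_star_mul_self.mp hB.nonneg
  have h1 : (A * (C.conjTranspose * C)).trace = (C * A * C.conjTranspose).trace := by
    rw [← mul_assoc, Matrix.trace_mul_cycle]
  rw [h1, Matrix.trace]
  simp only [Matrix.diag]
  rw [Complex.re_sum]
  exact Finset.sum_nonneg fun i _ => re_diag_nonneg _ (hA.mul_mul_conjTranspose_same C) i

lemma mfun_eq (f : ℝ → ℝ) (M : Matrix (Fin n) (Fin n) ℂ) (hM : M.IsHermitian) :
    mfun f M = cfc f M := by
  rw [mfun, dif_pos hM, ← hM.cfc_eq]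

lemma sqrt_mul_self_cfc (M : Matrix (Fin n) (Fin n) ℂ) (hM : M.IsHermitian) :
    mfun Real.sqrt (M * M) = cfc (fun x : ℝ => |x|) M := by
  have hM2 : (M * M).IsHermitian := by
    rw [Matrix.IsHermitian, Matrix.conjTranspose_mul, hM.eq]
  rw [mfun_eq _ _ hM2]
  have hsa : IsSelfAdjoint M := hM
  have h1 : cfc (fun x : ℝ => x * x) M = M * M := by
    rw [cfc_mul _ _ M (contOn M _) (contOn M _), cfc_id' ℝ M hsa]
  rw [← h1, ← cfc_comp Real.sqrt (fun x : ℝ => x * x) M hsa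
    Real.continuous_sqrt.continuousOn (contOn M _)]
  apply cfc_congr
  intro x _
  simp only [Function.comp]
  rw [← Real.sqrt_sq_eq_abs, sq]

lemma mposPart_eq_cfc (M : Matrix (Fin n) (Fin n) ℂ) (hM : M.IsHermitian) :
    mposPart M = cfc (fun x : ℝ => max x 0) M := by
  have hsa : IsSelfAdjoint M := hM
  rw [mposPart, sqrt_mul_self_cfc M hM]
  have h1 : cfc (fun x : ℝ => |x| + x) M = cfc (fun x : ℝ => |x|) M + M := by
    rw [cfc_add (a := M) _ _ (contOn M _) (contOn M _), cfc_id' ℝ M hsa]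
  rw [← h1]
  have h2 : (2 : ℂ)⁻¹ • cfc (fun x : ℝ => |x| + x) M
      = (2 : ℝ)⁻¹ • cfc (fun x : ℝ => |x| + x) M := by
    rw [show ((2 : ℂ)⁻¹) = (((2 : ℝ)⁻¹ : ℝ) : ℂ) by norm_num]
    rw [← Complex.coe_algebraMap, algebraMap_smul]
  rw [h2, ← cfc_smul ((2:ℝ)⁻¹) _ M (contOn M _)]
  apply cfc_congr
  intro x _
  simp only [smul_eq_mul]
  rcases le_total x 0 with h | h
  · rw [abs_of_nonpos h, max_eq_right h]
    ring
  · rw [abs_of_nonneg h, max_eq_left h]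
    ring

lemma trace_mul_le_posPart (A P : Matrix (Fin n) (Fin n) ℂ) (hA : A.IsHermitian)
    (hP : P.PosSemidef) (hP1 : ((1 : Matrix (Fin n) (Fin n) ℂ) - P).PosSemidef) :
    ((P * A).trace).re ≤ ((mposPart A).trace).re := by
  have hsa : IsSelfAdjoint A := hA
  have hApos := psd_cfc A hA (fun x => max x 0) (fun x => le_max_right _ _)
  have hAneg := psd_cfc A hA (fun x => max (-x) 0) (fun x => le_max_right _ _)
  have hsplit : cfc (fun x : ℝ => max x 0) A - cfc (fun x : ℝ => max (-x) 0) A = A := by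
    rw [← cfc_sub _ _ A (contOn A _) (contOn A _)]
    refine (cfc_congr fun x _ => ?_).trans (cfc_id' ℝ A hsa)
    rcases le_total x 0 with h | h
    · rw [max_eq_right h, max_eq_left (by linarith)]; ring
    · rw [max_eq_left h, max_eq_right (by linarith)]; ring
  have key1 : 0 ≤ ((P * cfc (fun x : ℝ => max (-x) 0) A).trace).re :=
    re_trace_mul_nonneg _ _ hP hAneg
  have key2 : ((P * cfc (fun x : ℝ => max x 0) A).trace).re
      ≤ ((cfc (fun x : ℝ => max x 0) A).trace).re := by
    have h3 : 0 ≤ ((((1 : Matrix (Fin n) (Fin n) ℂ) - P)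
        * cfc (fun x : ℝ => max x 0) A).trace).re :=
      re_trace_mul_nonneg _ _ hP1 hApos
    rw [Matrix.sub_mul, Matrix.one_mul, Matrix.trace_sub, Complex.sub_re] at h3
    linarith
  have hPA : ((P * A).trace).re = ((P * cfc (fun x : ℝ => max x 0) A).trace).re
      - ((P * cfc (fun x : ℝ => max (-x) 0) A).trace).re := by
    conv_lhs => rw [← hsplit]
    rw [Matrix.mul_sub, Matrix.trace_sub, Complex.sub_re]
  rw [hPA, mposPart_eq_cfc A hA]
  linarith

lemma traceNorm_herm (Z : Matrix (Fin n) (Fin n) ℂ) (hZ : Z.IsHermitian) :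
    traceNorm Z = ∑ i, |hZ.eigenvalues i| := by
  rw [traceNorm, hZ.eq, sqrt_mul_self_cfc Z hZ, trace_cfc_re Z hZ]

lemma posPart_le_traceNorm (Z : Matrix (Fin n) (Fin n) ℂ) (hZ : Z.IsHermitian) :
    ((mposPart Z).trace).re ≤ traceNorm Z := by
  rw [mposPart_eq_cfc Z hZ, trace_cfc_re Z hZ, traceNorm_herm Z hZ]
  exact Finset.sum_le_sum fun i _ => max_le (le_abs_self _) (abs_nonneg _)

lemma one_sided (X Y : Matrix (Fin n) (Fin n) ℂ)
    (hX : X.IsHermitian) (hY : Y.IsHermitian) :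
    ((mposPart X).trace).re - ((mposPart Y).trace).re ≤ traceNorm (X - Y) := by
  have hsaX : IsSelfAdjoint X := hX
  set ind : ℝ → ℝ := fun x => if 0 < x then 1 else 0 with hind
  set P : Matrix (Fin n) (Fin n) ℂ := cfc ind X with hPdef
  have hP : P.PosSemidef := psd_cfc X hX ind (fun x => by by_cases h : 0 < x <;> simp [hind, h])
  have hP1 : ((1 : Matrix (Fin n) (Fin n) ℂ) - P).PosSemidef := by
    have h1 : cfc (fun x : ℝ => 1 - ind x) X = 1 - P := by
      rw [cfc_sub _ _ X (contOn X _) (contOn X _), cfc_const_one ℝ X hsaX]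
    rw [← h1]
    exact psd_cfc X hX _ (fun x => by by_cases h : 0 < x <;> simp [hind, h])
  have hPX : P * X = mposPart X := by
    have h1 : cfc (fun x : ℝ => ind x * x) X = P * X := by
      rw [cfc_mul _ _ X (contOn X _) (contOn X _), cfc_id' ℝ X hsaX]
    rw [← h1, mposPart_eq_cfc X hX]
    apply cfc_congr
    intro x _
    by_cases h : 0 < x
    · simp only [hind]
      rw [if_pos h, one_mul, max_eq_left h.le]
    · simp only [hind]
      rw [if_neg h, zero_mul, max_eq_right (le_of_not_gt h)]
  have hXY : (X - Y).IsHermitian := hX.sub hY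
  have step1 : ((P * (X - Y)).trace).re ≤ ((mposPart (X - Y)).trace).re :=
    trace_mul_le_posPart (X - Y) P hXY hP hP1
  have step2 : ((P * Y).trace).re ≤ ((mposPart Y).trace).re :=
    trace_mul_le_posPart Y P hY hP hP1
  have step3 : ((mposPart (X - Y)).trace).re ≤ traceNorm (X - Y) :=
    posPart_le_traceNorm _ hXY
  have hsplit : ((P * (X - Y)).trace).re = ((mposPart X).trace).re - ((P * Y).trace).re := by
    rw [Matrix.mul_sub, Matrix.trace_sub, Complex.sub_re, hPX]
  linarith

lemma traceNorm_sub_symm (X Y : Matrix (Fin n) (Fin n) ℂ) :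
    traceNorm (X - Y) = traceNorm (Y - X) := by
  unfold traceNorm
  congr 2
  rw [← neg_sub X Y, Matrix.conjTranspose_neg, Matrix.neg_mul, Matrix.mul_neg, neg_neg]

end Aux

/-- `Y ↦ Tr[Y₊]` is 1-Lipschitz for the trace norm on Hermitian matrices. -/
theorem trace_posPart_lipschitz (n : ℕ) (X Y : Matrix (Fin n) (Fin n) ℂ)
    (hX : X.IsHermitian) (hY : Y.IsHermitian) :
    |((mposPart X).trace).re - ((mposPart Y).trace).re| ≤ traceNorm (X - Y) := by
  rw [abs_sub_le_iff]
  refine ⟨one_sided X Y hX hY, ?_⟩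
  rw [traceNorm_sub_symm]
  exact one_sided Y X hY hX

end
end

section
/- For every positive semidefinite n×n complex matrix A, every positive definite matrix B, and every Hermitian matrix X, the function t ↦ D(A‖B + tX) is differentiable at t = 0 (where it is defined for |t| small enough that B + tX is positive definite), with derivative d/dt D(A‖B + tX)|_{t=0} = −Tr[A · Dlog[B](X)] + Tr[X]. -/
/-!
Common setup: matrices are `n × n` complex matrices. Functions of Hermitian matrices are
taken via the spectral theorem (functional calculus). Matrix-valued integrals are Bochner
integrals (with respect to the entrywise sup norm; all norms on this finite-dimensional
space are equivalent, so the Bochner integral does not depend on this choice), and the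
directional derivative `Dlog[B](H) = lim_{t→0} (log(B+tH) - log B)/t` is expressed through
`HasDerivAt (fun t => mlog (B + t • H)) · 0`, which asserts both the existence of the limit
and its value.
-/

open MeasureTheory
open scoped ComplexOrder

attribute [local instance] Matrix.normedAddCommGroup Matrix.normedSpace

noncomputable section

variable {n : ℕ}

/-- `t ↦ D(A‖B + tX)` is differentiable at `t = 0`, with derivative
`-Tr[A · Dlog[B](X)] + Tr[X]`.  Here `DX = Dlog[B](X)` is characterized by the hypothesis
`hDX` (the directional derivative of the matrix logarithm exists and is unique). -/
theorem hasDerivAt_relEnt_second_arg (n : ℕ) (A B X : Matrix (Fin n) (Fin n) ℂ)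
    (hA : A.PosSemidef) (hB : B.PosDef) (hX : X.IsHermitian)
    (DX : Matrix (Fin n) (Fin n) ℂ)
    (hDX : HasDerivAt (fun t : ℝ => mlog (B + t • X)) DX 0) :
    HasDerivAt (fun t : ℝ => relEnt A (B + t • X))
      (-((A * DX).trace).re + X.trace.re) 0 := by
  classical
  -- the ℝ-linear continuous map  M ↦ Re Tr (A * M)
  let ψ : Matrix (Fin n) (Fin n) ℂ →ₗ[ℝ] ℝ :=
    { toFun := fun M => ((A * M).trace).re
      map_add' := by intro M N; simp [Matrix.mul_add]
      map_smul' := by intro r M; simp [Matrix.mul_smul] }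
  let φ : Matrix (Fin n) (Fin n) ℂ →L[ℝ] ℝ := LinearMap.toContinuousLinearMap ψ
  have hφ : ∀ M, φ M = ((A * M).trace).re := fun M => rfl
  have hcomp : HasDerivAt (fun t : ℝ => φ (mlog (B + t • X)))
      (φ DX) 0 := by
    exact φ.hasFDerivAt.comp_hasDerivAt 0 hDX
  have key : ∀ t : ℝ, relEnt A (B + t • X) =
      (((mfun (fun x => x * Real.log x) A) + B - A).trace).re + t * X.trace.re
        - φ (mlog (B + t • X)) := by
    intro t
    simp only [relEnt, hφ]
    rw [show mfun (fun x => x * Real.log x) A - A * mlog (B + t • X) + (B + t • X) - A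
        = ((mfun (fun x => x * Real.log x) A) + B - A) + t • X - A * mlog (B + t • X) by abel]
    simp [Matrix.trace_sub, Matrix.trace_add, Matrix.trace_smul, Complex.smul_re]
  have h1 : HasDerivAt (fun t : ℝ =>
      (((mfun (fun x => x * Real.log x) A) + B - A).trace).re + t * X.trace.re
        - φ (mlog (B + t • X)))
      (-((A * DX).trace).re + X.trace.re) 0 := by
    have := ((hasDerivAt_const (0:ℝ) ((((mfun (fun x => x * Real.log x) A) + B - A).trace).re)).add
      ((hasDerivAt_id (0:ℝ)).mul_const X.trace.re)).sub hcomp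
    convert this using 1
    · rfl
    · rfl
    · rfl
    simp [hφ]
    ring
  exact h1.congr_of_eventuallyEq (Filter.Eventually.of_forall key)


end
end

section
/- The map H ↦ Dlog[B](H) is self-adjoint with respect to the Hilbert–Schmidt inner product: for every positive definite n×n complex matrix B and all Hermitian matrices A and X, Tr[A · Dlog[B](X)] = Tr[X · Dlog[B](A)]. -/
/-!
Common setup: matrices are `n × n` complex matrices. Functions of Hermitian matrices are
taken via the spectral theorem (functional calculus). Matrix-valued integrals are Bochner
integrals (with respect to the entrywise sup norm; all norms on this finite-dimensional
space are equivalent, so the Bochner integral does not depend on this choice), and the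
directional derivative `Dlog[B](H) = lim_{t→0} (log(B+tH) - log B)/t` is expressed through
`HasDerivAt (fun t => mlog (B + t • H)) · 0`, which asserts both the existence of the limit
and its value.
-/

open MeasureTheory
open scoped ComplexOrder

attribute [local instance] Matrix.normedAddCommGroup Matrix.normedSpace

noncomputable section

variable {n : ℕ}

namespace DlogAux
open scoped Matrix Topology
variable {m : ℕ}

/-- scaled norm, submultiplicative. -/
def nu (P : Matrix (Fin m) (Fin m) ℂ) : ℝ := (m + 1 : ℝ) * ‖P‖

lemma nu_nonneg (P : Matrix (Fin m) (Fin m) ℂ) : 0 ≤ nu P := by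
  unfold nu; positivity

lemma norm_le_nu (P : Matrix (Fin m) (Fin m) ℂ) : ‖P‖ ≤ nu P := by
  unfold nu; nlinarith [norm_nonneg P]

lemma nu_mul_le (P Q : Matrix (Fin m) (Fin m) ℂ) : nu (P * Q) ≤ nu P * nu Q := by
  unfold nu
  have h : ‖P * Q‖ ≤ (m + 1 : ℝ) * ‖P‖ * ‖Q‖ := by
    rw [Matrix.norm_le_iff (by positivity)]
    intro i j
    calc ‖(P * Q) i j‖ = ‖∑ k, P i k * Q k j‖ := by rfl
      _ ≤ ∑ k, ‖P i k * Q k j‖ := norm_sum_le _ _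
      _ ≤ ∑ _k : Fin m, ‖P‖ * ‖Q‖ := by
          refine Finset.sum_le_sum fun k _ => ?_
          rw [norm_mul]
          gcongr <;> exact Matrix.norm_entry_le_entrywise_sup_norm _
      _ = (m : ℝ) * (‖P‖ * ‖Q‖) := by simp [mul_comm]
      _ ≤ (m + 1 : ℝ) * ‖P‖ * ‖Q‖ := by
          have := norm_nonneg P; have := norm_nonneg Q; nlinarith
  nlinarith [norm_nonneg P, norm_nonneg Q, norm_nonneg (P * Q)]

lemma nu_add_le (P Q : Matrix (Fin m) (Fin m) ℂ) : nu (P + Q) ≤ nu P + nu Q := by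
  unfold nu
  have := norm_add_le P Q
  nlinarith

lemma nu_one_le : nu (1 : Matrix (Fin m) (Fin m) ℂ) ≤ (m + 1 : ℝ) := by
  unfold nu
  have h : ‖(1 : Matrix (Fin m) (Fin m) ℂ)‖ ≤ 1 := by
    rw [Matrix.norm_le_iff zero_le_one]
    intro i j
    by_cases h : i = j <;> simp [Matrix.one_apply, h]
  nlinarith

lemma nu_pow_le {P : Matrix (Fin m) (Fin m) ℂ} {x : ℝ} (h : nu P ≤ x) (k : ℕ) :
    nu (P ^ k) ≤ (m + 1 : ℝ) * x ^ k := by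
  have hx : 0 ≤ x := le_trans (nu_nonneg P) h
  induction k with
  | zero => simpa using nu_one_le
  | succ k ih =>
      calc nu (P ^ (k + 1)) = nu (P ^ k * P) := by rw [pow_succ]
        _ ≤ nu (P ^ k) * nu P := nu_mul_le _ _
        _ ≤ ((m + 1 : ℝ) * x ^ k) * x := by
            apply mul_le_mul ih h (nu_nonneg P); positivity
        _ = (m + 1 : ℝ) * x ^ (k + 1) := by ring

lemma norm_pow_le (P : Matrix (Fin m) (Fin m) ℂ) (k : ℕ) : ‖P ^ k‖ ≤ nu P ^ k := by
  have h := nu_pow_le (le_refl (nu P)) k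
  unfold nu at h
  have hm : (0:ℝ) < m + 1 := by positivity
  exact (mul_le_mul_iff_right₀ hm).mp h

/-- The matrix exponential as an explicit tsum. -/
def E (P : Matrix (Fin m) (Fin m) ℂ) : Matrix (Fin m) (Fin m) ℂ :=
  ∑' k : ℕ, ((k.factorial : ℂ))⁻¹ • P ^ k

lemma norm_E_term_le (P : Matrix (Fin m) (Fin m) ℂ) (k : ℕ) :
    ‖((k.factorial : ℂ))⁻¹ • P ^ k‖ ≤ nu P ^ k / k.factorial := by
  rw [norm_smul]
  have h1 : ‖((k.factorial : ℂ))⁻¹‖ = ((k.factorial : ℝ))⁻¹ := by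
    rw [norm_inv]; norm_num
  rw [h1, div_eq_inv_mul]
  exact mul_le_mul_of_nonneg_left (norm_pow_le P k) (by positivity)

lemma summable_E (P : Matrix (Fin m) (Fin m) ℂ) :
    Summable (fun k : ℕ => ((k.factorial : ℂ))⁻¹ • P ^ k) := by
  apply Summable.of_norm_bounded ?_ (norm_E_term_le P)
  simpa [div_eq_mul_inv] using Real.summable_pow_div_factorial (nu P)

/-- `S M K k = ∑_{i+j=k-1} M^i K M^j`. -/
def S (M K : Matrix (Fin m) (Fin m) ℂ) (k : ℕ) : Matrix (Fin m) (Fin m) ℂ :=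
  ∑ i ∈ Finset.range k, M ^ i * K * M ^ (k - 1 - i)

lemma nu_S_le (M K : Matrix (Fin m) (Fin m) ℂ) (k : ℕ) :
    nu (S M K k) ≤ k * ((m+1:ℝ)^2 * nu K * nu M ^ (k-1)) := by
  have hterm : ∀ i ∈ Finset.range k,
      nu (M ^ i * K * M ^ (k - 1 - i)) ≤ (m+1:ℝ)^2 * nu K * nu M ^ (k-1) := by
    intro i hi
    have hi' : i < k := Finset.mem_range.mp hi
    have h1 : nu (M ^ i * K * M ^ (k - 1 - i)) ≤ nu (M ^ i) * nu K * nu (M ^ (k-1-i)) := by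
      calc nu (M ^ i * K * M ^ (k - 1 - i)) ≤ nu (M ^ i * K) * nu (M ^ (k-1-i)) := nu_mul_le _ _
        _ ≤ nu (M ^ i) * nu K * nu (M ^ (k-1-i)) := by
            apply mul_le_mul_of_nonneg_right (nu_mul_le _ _) (nu_nonneg _)
    have h2 : nu (M ^ i) ≤ (m+1:ℝ) * nu M ^ i := nu_pow_le le_rfl i
    have h3 : nu (M ^ (k-1-i)) ≤ (m+1:ℝ) * nu M ^ (k-1-i) := nu_pow_le le_rfl (k-1-i)
    have hexp : nu M ^ i * nu M ^ (k-1-i) = nu M ^ (k-1) := by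
      rw [← pow_add]
      congr 1
      omega
    calc nu (M ^ i * K * M ^ (k - 1 - i)) ≤ nu (M ^ i) * nu K * nu (M ^ (k-1-i)) := h1
      _ ≤ ((m+1:ℝ) * nu M ^ i) * nu K * ((m+1:ℝ) * nu M ^ (k-1-i)) := by
          have := nu_nonneg K; have := nu_nonneg (M ^ i); have := nu_nonneg (M ^ (k-1-i))
          have h4 : (0:ℝ) ≤ (m+1:ℝ) * nu M ^ i := le_trans (nu_nonneg _) h2
          apply mul_le_mul _ h3 (nu_nonneg _) (by positivity)
          exact mul_le_mul h2 le_rfl ‹0 ≤ nu K› (by positivity)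
      _ = (m+1:ℝ)^2 * nu K * (nu M ^ i * nu M ^ (k-1-i)) := by ring
      _ = (m+1:ℝ)^2 * nu K * nu M ^ (k-1) := by rw [hexp]
  calc nu (S M K k) ≤ ∑ i ∈ Finset.range k, nu (M ^ i * K * M ^ (k - 1 - i)) := by
        unfold S nu
        have h := norm_sum_le (Finset.range k) (fun i => M ^ i * K * M ^ (k - 1 - i))
        calc (m+1:ℝ) * ‖∑ i ∈ Finset.range k, M ^ i * K * M ^ (k - 1 - i)‖
            ≤ (m+1:ℝ) * ∑ i ∈ Finset.range k, ‖M ^ i * K * M ^ (k - 1 - i)‖ := by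
              apply mul_le_mul_of_nonneg_left h (by positivity)
          _ = ∑ i ∈ Finset.range k, (m+1:ℝ) * ‖M ^ i * K * M ^ (k - 1 - i)‖ := Finset.mul_sum _ _ _
    _ ≤ ∑ _i ∈ Finset.range k, (m+1:ℝ)^2 * nu K * nu M ^ (k-1) := Finset.sum_le_sum hterm
    _ = k * ((m+1:ℝ)^2 * nu K * nu M ^ (k-1)) := by simp [mul_comm]

lemma summable_aux (a : ℝ) : Summable (fun k : ℕ => (k : ℝ) * a ^ (k-1) / k.factorial) := by
  apply (summable_nat_add_iff 1).mp
  have he : (fun k : ℕ => ((k + 1 : ℕ) : ℝ) * a ^ ((k+1)-1) / (k+1).factorial)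
      = fun k : ℕ => a ^ k / k.factorial := by
    funext k
    rw [Nat.factorial_succ]
    push_cast
    have h1 : ((k:ℝ) + 1) ≠ 0 := by positivity
    field_simp
  rw [he]
  exact Real.summable_pow_div_factorial a

lemma norm_S_term_le (M K : Matrix (Fin m) (Fin m) ℂ) (k : ℕ) :
    ‖((k.factorial : ℂ))⁻¹ • S M K k‖ ≤
      ((m+1:ℝ)^2 * nu K) * ((k:ℝ) * nu M ^ (k-1) / k.factorial) := by
  rw [norm_smul]
  have h1 : ‖((k.factorial : ℂ))⁻¹‖ = ((k.factorial : ℝ))⁻¹ := by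
    rw [norm_inv]; norm_num
  rw [h1]
  have h2 : ‖S M K k‖ ≤ (k:ℝ) * ((m+1:ℝ)^2 * nu K * nu M ^ (k-1)) :=
    le_trans (norm_le_nu _) (nu_S_le M K k)
  calc ((k.factorial : ℝ))⁻¹ * ‖S M K k‖
      ≤ ((k.factorial : ℝ))⁻¹ * ((k:ℝ) * ((m+1:ℝ)^2 * nu K * nu M ^ (k-1))) := by
        apply mul_le_mul_of_nonneg_left h2 (by positivity)
    _ = ((m+1:ℝ)^2 * nu K) * ((k:ℝ) * nu M ^ (k-1) / k.factorial) := by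
        field_simp

lemma summable_S (M K : Matrix (Fin m) (Fin m) ℂ) :
    Summable (fun k : ℕ => ((k.factorial : ℂ))⁻¹ • S M K k) := by
  apply Summable.of_norm_bounded ?_ (norm_S_term_le M K)
  exact (summable_aux (nu M)).mul_left _

/-- The candidate derivative of `E` at `M`, applied to `K`. -/
def T (M K : Matrix (Fin m) (Fin m) ℂ) : Matrix (Fin m) (Fin m) ℂ :=
  ∑' k : ℕ, ((k.factorial : ℂ))⁻¹ • S M K k

lemma S_add (M K K' : Matrix (Fin m) (Fin m) ℂ) (k : ℕ) :
    S M (K + K') k = S M K k + S M K' k := by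
  simp [S, mul_add, add_mul, Finset.sum_add_distrib]

lemma S_smul (M K : Matrix (Fin m) (Fin m) ℂ) (r : ℝ) (k : ℕ) :
    S M (r • K) k = r • S M K k := by
  simp [S, Finset.smul_sum, mul_smul_comm, smul_mul_assoc]

lemma T_add (M K K' : Matrix (Fin m) (Fin m) ℂ) : T M (K + K') = T M K + T M K' := by
  unfold T
  simp only [S_add, smul_add]
  exact Summable.tsum_add (summable_S M K) (summable_S M K')

lemma T_smul (M K : Matrix (Fin m) (Fin m) ℂ) (r : ℝ) : T M (r • K) = r • T M K := by
  unfold T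
  simp only [S_smul]
  have h : ∀ k : ℕ, ((k.factorial : ℂ))⁻¹ • (r • S M K k) = r • (((k.factorial : ℂ))⁻¹ • S M K k) :=
    fun k => smul_comm _ _ _
  simp only [h]
  exact Summable.tsum_const_smul r (summable_S M K)

lemma S_succ (M K : Matrix (Fin m) (Fin m) ℂ) (k : ℕ) :
    S M K (k+1) = S M K k * M + M ^ k * K := by
  unfold S
  rw [Finset.sum_range_succ]
  congr 1
  · rw [Finset.sum_mul]
    apply Finset.sum_congr rfl
    intro i hi
    have hik : i < k := Finset.mem_range.mp hi
    have h : (k+1) - 1 - i = (k - 1 - i) + 1 := by omega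
    rw [h, pow_succ, ← mul_assoc]
  · have h : (k+1) - 1 - k = 0 := by omega
    rw [h, pow_zero, mul_one]

lemma R_succ (M K : Matrix (Fin m) (Fin m) ℂ) (k : ℕ) :
    (M+K)^(k+1) - M^(k+1) - S M K (k+1)
      = ((M+K)^k - M^k - S M K k) * M + ((M+K)^k - M^k) * K := by
  rw [S_succ, pow_succ, pow_succ]
  noncomm_ring

lemma bound_u (M K : Matrix (Fin m) (Fin m) ℂ) (k : ℕ) :
    nu ((M+K)^k - M^k) ≤ (m+1:ℝ) * ((nu M + nu K)^k - nu M ^ k) := by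
  set a := nu M
  set b := nu K
  induction k with
  | zero => simp [nu]
  | succ k ih =>
      have hd : (M+K)^(k+1) - M^(k+1) = ((M+K)^k - M^k) * M + (M+K)^k * K := by
        rw [pow_succ, pow_succ]; noncomm_ring
      have h1 : nu ((M+K)^(k+1) - M^(k+1))
          ≤ nu (((M+K)^k - M^k) * M) + nu ((M+K)^k * K) := by
        rw [hd]; exact nu_add_le _ _
      have h2 : nu (((M+K)^k - M^k) * M) ≤ ((m+1:ℝ) * ((a+b)^k - a^k)) * a :=
        le_trans (nu_mul_le _ _) (mul_le_mul_of_nonneg_right ih (nu_nonneg M))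
      have h3 : nu ((M+K)^k * K) ≤ ((m+1:ℝ) * (a+b)^k) * b := by
        refine le_trans (nu_mul_le _ _) (mul_le_mul ?_ le_rfl (nu_nonneg K) ?_)
        · exact nu_pow_le (nu_add_le M K) k
        · have := nu_nonneg M; have := nu_nonneg K
          positivity
      calc nu ((M+K)^(k+1) - M^(k+1)) ≤ ((m+1:ℝ) * ((a+b)^k - a^k)) * a + ((m+1:ℝ) * (a+b)^k) * b := by
            linarith
        _ = (m+1:ℝ) * ((a+b)^(k+1) - a^(k+1)) := by rw [pow_succ, pow_succ]; ring

lemma bound_R (M K : Matrix (Fin m) (Fin m) ℂ) (k : ℕ) :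
    nu ((M+K)^k - M^k - S M K k)
      ≤ (m+1:ℝ) * ((nu M + nu K)^k - nu M ^ k - k * nu M ^ (k-1) * nu K) := by
  set a := nu M
  set b := nu K
  induction k with
  | zero => simp [S, nu]
  | succ k ih =>
      simp only [Nat.add_sub_cancel]
      have h1 : nu ((M+K)^(k+1) - M^(k+1) - S M K (k+1))
          ≤ nu (((M+K)^k - M^k - S M K k) * M) + nu (((M+K)^k - M^k) * K) := by
        rw [R_succ]; exact nu_add_le _ _
      have h2 : nu (((M+K)^k - M^k - S M K k) * M)
          ≤ ((m+1:ℝ) * ((a+b)^k - a^k - k * a^(k-1) * b)) * a :=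
        le_trans (nu_mul_le _ _) (mul_le_mul_of_nonneg_right ih (nu_nonneg M))
      have h3 : nu (((M+K)^k - M^k) * K) ≤ ((m+1:ℝ) * ((a+b)^k - a^k)) * b :=
        le_trans (nu_mul_le _ _) (mul_le_mul_of_nonneg_right (bound_u M K k) (nu_nonneg K))
      have hk : (k:ℝ) * a^(k-1) * a = (k:ℝ) * a^k := by
        cases k with
        | zero => simp
        | succ k => rw [pow_succ]; push_cast; ring_nf
      calc nu ((M+K)^(k+1) - M^(k+1) - S M K (k+1))
          ≤ ((m+1:ℝ) * ((a+b)^k - a^k - k * a^(k-1) * b)) * a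
            + ((m+1:ℝ) * ((a+b)^k - a^k)) * b := by linarith
        _ = (m+1:ℝ) * ((a+b)^(k+1) - a^(k+1) - ((k+1 : ℕ) : ℝ) * a^k * b) := by
            rw [pow_succ (a+b), pow_succ a]
            push_cast
            linear_combination (-(((m:ℝ)+1)*b)) * hk

lemma aux_shift (a : ℝ) : (fun k : ℕ => ((k + 1 : ℕ) : ℝ) * a ^ ((k+1)-1) / (k+1).factorial)
    = fun k : ℕ => a ^ k / k.factorial := by
  funext k
  rw [Nat.factorial_succ]
  push_cast
  have h1 : ((k:ℝ) + 1) ≠ 0 := by positivity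
  field_simp

lemma tsum_exp (a : ℝ) : ∑' k : ℕ, a ^ k / k.factorial = Real.exp a := by
  rw [Real.exp_eq_exp_ℝ, NormedSpace.exp_eq_tsum_div]

lemma tsum_shift (a : ℝ) : ∑' k : ℕ, (k : ℝ) * a ^ (k-1) / k.factorial = Real.exp a := by
  rw [Summable.tsum_eq_zero_add (summable_aux a)]
  simp only [Nat.cast_zero, zero_mul, zero_div, zero_add]
  exact (tsum_congr (fun k => congrFun (aux_shift a) k)).trans (tsum_exp a)

lemma summable_D (a b : ℝ) :
    Summable (fun k : ℕ => ((a+b) ^ k - a ^ k - (k:ℝ) * a ^ (k-1) * b) / k.factorial) := by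
  have h : (fun k : ℕ => ((a+b) ^ k - a ^ k - (k:ℝ) * a ^ (k-1) * b) / k.factorial)
      = fun k : ℕ => ((a+b) ^ k / k.factorial - a ^ k / k.factorial)
        - ((k:ℝ) * a ^ (k-1) / k.factorial) * b := by
    funext k; rw [sub_div, sub_div, mul_div_right_comm]
  rw [h]
  exact (((Real.summable_pow_div_factorial (a+b)).sub
    (Real.summable_pow_div_factorial a)).sub ((summable_aux a).mul_right b))

lemma tsum_D (a b : ℝ) :
    ∑' k : ℕ, ((a+b) ^ k - a ^ k - (k:ℝ) * a ^ (k-1) * b) / k.factorial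
      = Real.exp a * (Real.exp b - 1 - b) := by
  have h : (fun k : ℕ => ((a+b) ^ k - a ^ k - (k:ℝ) * a ^ (k-1) * b) / k.factorial)
      = fun k : ℕ => ((a+b) ^ k / k.factorial - a ^ k / k.factorial)
        - ((k:ℝ) * a ^ (k-1) / k.factorial) * b := by
    funext k; rw [sub_div, sub_div, mul_div_right_comm]
  rw [h, Summable.tsum_sub (((Real.summable_pow_div_factorial (a+b)).sub
      (Real.summable_pow_div_factorial a))) ((summable_aux a).mul_right b),
    Summable.tsum_sub (Real.summable_pow_div_factorial (a+b)) (Real.summable_pow_div_factorial a),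
    tsum_mul_right, tsum_exp, tsum_exp, tsum_shift, Real.exp_add]
  ring

lemma quad_bound {b : ℝ} (hb : 0 ≤ b) (hb1 : b ≤ 1) : Real.exp b - 1 - b ≤ b ^ 2 := by
  have h := Real.exp_bound (n := 2) (by rw [abs_of_nonneg hb]; exact hb1) (by norm_num)
  have hsum : ∑ m ∈ Finset.range 2, b ^ m / m.factorial = 1 + b := by
    simp [Finset.sum_range_succ]
  rw [hsum, abs_of_nonneg hb] at h
  have h2 := (abs_sub_le_iff.mp h).1
  norm_num [Nat.factorial] at h2
  nlinarith [sq_nonneg b]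

lemma norm_R_le (M K : Matrix (Fin m) (Fin m) ℂ) (k : ℕ) :
    ‖(M+K)^k - M^k - S M K k‖
      ≤ (nu M + nu K)^k - nu M ^ k - k * nu M ^ (k-1) * nu K := by
  have h := bound_R M K k
  unfold nu at h
  have hm : (0:ℝ) < m + 1 := by positivity
  exact (mul_le_mul_iff_right₀ hm).mp h

lemma E_approx (M K : Matrix (Fin m) (Fin m) ℂ) (hK : nu K ≤ 1) :
    ‖E (M + K) - E M - T M K‖
      ≤ (Real.exp (nu M) * (m+1:ℝ)^2) * (‖K‖ * ‖K‖) := by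
  set a := nu M
  set b := nu K
  have ha : 0 ≤ a := nu_nonneg M
  have hb : 0 ≤ b := nu_nonneg K
  have hdiff : E (M + K) - E M - T M K
      = ∑' k : ℕ, ((k.factorial : ℂ))⁻¹ • ((M+K)^k - M^k - S M K k) := by
    unfold E T
    rw [← Summable.tsum_sub (summable_E (M+K)) (summable_E M),
      ← Summable.tsum_sub (((summable_E (M+K)).sub (summable_E M))) (summable_S M K)]
    congr 1
    funext k
    rw [smul_sub, smul_sub]
  have hterm : ∀ k : ℕ, ‖((k.factorial : ℂ))⁻¹ • ((M+K)^k - M^k - S M K k)‖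
      ≤ ((a+b) ^ k - a ^ k - (k:ℝ) * a ^ (k-1) * b) / k.factorial := by
    intro k
    rw [norm_smul]
    have h1 : ‖((k.factorial : ℂ))⁻¹‖ = ((k.factorial : ℝ))⁻¹ := by
      rw [norm_inv]; norm_num
    rw [h1, div_eq_inv_mul]
    exact mul_le_mul_of_nonneg_left (norm_R_le M K k) (by positivity)
  have hsummable : Summable (fun k : ℕ => ‖((k.factorial : ℂ))⁻¹ • ((M+K)^k - M^k - S M K k)‖) :=
    Summable.of_nonneg_of_le (fun k => norm_nonneg _) hterm (summable_D a b)
  calc ‖E (M + K) - E M - T M K‖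
      = ‖∑' k : ℕ, ((k.factorial : ℂ))⁻¹ • ((M+K)^k - M^k - S M K k)‖ := by rw [hdiff]
    _ ≤ ∑' k : ℕ, ‖((k.factorial : ℂ))⁻¹ • ((M+K)^k - M^k - S M K k)‖ :=
        norm_tsum_le_tsum_norm hsummable
    _ ≤ ∑' k : ℕ, ((a+b) ^ k - a ^ k - (k:ℝ) * a ^ (k-1) * b) / k.factorial :=
        Summable.tsum_le_tsum hterm hsummable (summable_D a b)
    _ = Real.exp a * (Real.exp b - 1 - b) := tsum_D a b
    _ ≤ Real.exp a * b ^ 2 := by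
        apply mul_le_mul_of_nonneg_left (quad_bound hb hK) (Real.exp_nonneg a)
    _ = (Real.exp a * (m+1:ℝ)^2) * (‖K‖ * ‖K‖) := by
        have : b = (m+1:ℝ) * ‖K‖ := rfl
        rw [this]; ring

/-- `T M` as an `ℝ`-linear map. -/
def Tlin (M : Matrix (Fin m) (Fin m) ℂ) :
    Matrix (Fin m) (Fin m) ℂ →ₗ[ℝ] Matrix (Fin m) (Fin m) ℂ where
  toFun := T M
  map_add' := T_add M
  map_smul' r K := T_smul M K r

/-- `T M` as a continuous `ℝ`-linear map. -/
def Tclm (M : Matrix (Fin m) (Fin m) ℂ) :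
    Matrix (Fin m) (Fin m) ℂ →L[ℝ] Matrix (Fin m) (Fin m) ℂ :=
  LinearMap.toContinuousLinearMap (Tlin M)

lemma Tclm_apply (M K : Matrix (Fin m) (Fin m) ℂ) : Tclm M K = T M K := rfl

lemma hasFDerivAt_E (M : Matrix (Fin m) (Fin m) ℂ) : HasFDerivAt E (Tclm M) M := by
  refine hasFDerivAt_iff_isLittleO_nhds_zero.mpr ?_
  rw [Asymptotics.isLittleO_iff]
  intro ε hε
  set C := Real.exp (nu M) * (m+1:ℝ)^2 with hC
  have hC0 : 0 ≤ C := by positivity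
  have hδ : (0:ℝ) < min ((m+1:ℝ))⁻¹ (ε/(C+1)) := by
    apply lt_min (by positivity) (by positivity)
  filter_upwards [Metric.ball_mem_nhds (0 : Matrix (Fin m) (Fin m) ℂ) hδ] with K hK
  rw [Metric.mem_ball, dist_zero_right] at hK
  have hK1 : ‖K‖ < ((m+1:ℝ))⁻¹ := lt_of_lt_of_le hK (min_le_left _ _)
  have hK2 : ‖K‖ < ε/(C+1) := lt_of_lt_of_le hK (min_le_right _ _)
  have hnuK : nu K ≤ 1 := by
    calc nu K = ((m:ℝ)+1) * ‖K‖ := rfl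
      _ ≤ ((m:ℝ)+1) * ((m:ℝ)+1)⁻¹ :=
          mul_le_mul_of_nonneg_left hK1.le (by positivity)
      _ = 1 := mul_inv_cancel₀ (by positivity)
  have h := E_approx M K hnuK
  change ‖E (M + K) - E M - T M K‖ ≤ ε * ‖K‖
  calc ‖E (M + K) - E M - T M K‖ ≤ C * (‖K‖ * ‖K‖) := h
    _ ≤ ε * ‖K‖ := by
        have h3 : C * ‖K‖ ≤ ε := by
          have := norm_nonneg K
          rw [lt_div_iff₀ (by positivity)] at hK2
          nlinarith
        calc C * (‖K‖ * ‖K‖) = (C * ‖K‖) * ‖K‖ := by ring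
          _ ≤ ε * ‖K‖ := mul_le_mul_of_nonneg_right h3 (norm_nonneg K)

/-- Conjugation `P ↦ U * P * V` as a continuous linear map. -/
def conjClm (U V : Matrix (Fin m) (Fin m) ℂ) :
    Matrix (Fin m) (Fin m) ℂ →L[ℂ] Matrix (Fin m) (Fin m) ℂ :=
  LinearMap.toContinuousLinearMap
    { toFun := fun P => U * P * V
      map_add' := fun P Q => by noncomm_ring
      map_smul' := fun r P => by
        simp [mul_smul_comm, smul_mul_assoc] }

lemma conjClm_apply (U V P : Matrix (Fin m) (Fin m) ℂ) : conjClm U V P = U * P * V := rfl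

lemma conj_pow (U D V : Matrix (Fin m) (Fin m) ℂ) (hVU : V * U = 1) (hUV : U * V = 1) (k : ℕ) :
    (U * D * V) ^ k = U * D ^ k * V := by
  induction k with
  | zero => rw [pow_zero, pow_zero, mul_one, hUV]
  | succ k ih =>
      rw [pow_succ, ih]
      have h1 : U * D ^ k * V * (U * D * V) = U * D ^ k * ((V * U) * (D * V)) := by
        noncomm_ring
      rw [h1, hVU, one_mul, pow_succ]
      noncomm_ring

lemma E_conj (U D V : Matrix (Fin m) (Fin m) ℂ) (hVU : V * U = 1) (hUV : U * V = 1) :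
    E (U * D * V) = U * E D * V := by
  unfold E
  have h1 : ∀ k : ℕ, ((k.factorial : ℂ))⁻¹ • (U * D * V) ^ k
      = conjClm U V (((k.factorial : ℂ))⁻¹ • D ^ k) := by
    intro k
    rw [_root_.map_smul, conjClm_apply, conj_pow U D V hVU hUV]
  rw [tsum_congr h1, ← ContinuousLinearMap.map_tsum _ (summable_E D)]
  rfl

lemma E_diagonal (d : Fin m → ℂ) :
    E (Matrix.diagonal d) = Matrix.diagonal (fun i => Complex.exp (d i)) := by
  apply HasSum.tsum_eq
  refine Pi.hasSum.mpr ?_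
  intro i
  rw [Pi.hasSum]
  intro j
  by_cases hij : i = j
  · subst hij
    have h : ∀ k : ℕ, (((k.factorial : ℂ))⁻¹ • (Matrix.diagonal d) ^ k) i i
        = d i ^ k / k.factorial := by
      intro k
      rw [Matrix.diagonal_pow]
      simp [Matrix.diagonal_apply_eq, div_eq_inv_mul]
    rw [show (Matrix.diagonal (fun i => Complex.exp (d i))) i i = Complex.exp (d i) from
      Matrix.diagonal_apply_eq _ i]
    simp only [h]
    rw [Complex.exp_eq_exp_ℂ]
    exact NormedSpace.expSeries_div_hasSum_exp (d i)
  · have h : ∀ k : ℕ, (((k.factorial : ℂ))⁻¹ • (Matrix.diagonal d) ^ k) i j = 0 := by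
      intro k
      rw [Matrix.diagonal_pow]
      simp [Matrix.diagonal_apply_ne _ hij]
    rw [show (Matrix.diagonal (fun i => Complex.exp (d i))) i j = 0 from
      Matrix.diagonal_apply_ne _ hij]
    simp only [h]
    exact hasSum_zero

lemma E_cfc_log {P : Matrix (Fin m) (Fin m) ℂ} (hP : P.PosDef) :
    E (hP.1.cfc Real.log) = P := by
  rw [Matrix.IsHermitian.cfc, Unitary.conjStarAlgAut_apply]
  set U := (hP.1.eigenvectorUnitary : Matrix (Fin m) (Fin m) ℂ) with hU
  have hUV : U * star U = 1 := (Matrix.mem_unitaryGroup_iff).mp hP.1.eigenvectorUnitary.2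
  have hVU : star U * U = 1 := (Matrix.mem_unitaryGroup_iff').mp hP.1.eigenvectorUnitary.2
  rw [E_conj U _ (star U) hVU hUV, E_diagonal]
  have h : (fun i => Complex.exp ((RCLike.ofReal ∘ Real.log ∘ hP.1.eigenvalues) i))
      = RCLike.ofReal ∘ hP.1.eigenvalues := by
    funext i
    simp only [Function.comp_apply]
    rw [show (RCLike.ofReal (Real.log (hP.1.eigenvalues i)) : ℂ)
        = ((Real.log (hP.1.eigenvalues i) : ℝ) : ℂ) from rfl,
      ← Complex.ofReal_exp, Real.exp_log (hP.eigenvalues_pos i)]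
    rfl
  rw [h]
  exact hP.1.spectral_theorem.symm

/-- `R ↦ Tr(R * Q)` as a continuous linear map. -/
def traceRightClm (Q : Matrix (Fin m) (Fin m) ℂ) : Matrix (Fin m) (Fin m) ℂ →L[ℂ] ℂ :=
  LinearMap.toContinuousLinearMap
    ((Matrix.traceLinearMap (Fin m) ℂ ℂ).comp (LinearMap.mulRight ℂ Q))

/-- `R ↦ Tr(P * R)` as a continuous linear map. -/
def traceLeftClm (P : Matrix (Fin m) (Fin m) ℂ) : Matrix (Fin m) (Fin m) ℂ →L[ℂ] ℂ :=
  LinearMap.toContinuousLinearMap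
    ((Matrix.traceLinearMap (Fin m) ℂ ℂ).comp (LinearMap.mulLeft ℂ P))

lemma traceRightClm_apply (Q R : Matrix (Fin m) (Fin m) ℂ) :
    traceRightClm Q R = (R * Q).trace := rfl

lemma traceLeftClm_apply (P R : Matrix (Fin m) (Fin m) ℂ) :
    traceLeftClm P R = (P * R).trace := rfl

lemma trace_S_comm (M P Q : Matrix (Fin m) (Fin m) ℂ) (k : ℕ) :
    ((S M P k) * Q).trace = (P * (S M Q k)).trace := by
  unfold S
  rw [Finset.sum_mul, Finset.mul_sum, Matrix.trace_sum, Matrix.trace_sum]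
  have h1 : ∀ i ∈ Finset.range k,
      (M ^ i * P * M ^ (k-1-i) * Q).trace = (P * (M ^ (k-1-i) * Q * M ^ i)).trace := by
    intro i _
    have e1 : M ^ i * P * M ^ (k-1-i) * Q = M ^ i * (P * M ^ (k-1-i) * Q) := by noncomm_ring
    have e2 : P * M ^ (k-1-i) * Q * M ^ i = P * (M ^ (k-1-i) * Q * M ^ i) := by noncomm_ring
    rw [e1, Matrix.trace_mul_comm, e2]
  rw [Finset.sum_congr rfl h1]
  rw [show ∀ f : ℕ → ℂ, (∑ i ∈ Finset.range k, f i) = ∑ i ∈ Finset.range k, f i from fun _ => rfl]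
  have h2 := Finset.sum_range_reflect
    (fun i => (P * (M ^ i * Q * M ^ (k-1-i))).trace) k
  rw [← h2]
  apply Finset.sum_congr rfl
  intro i hi
  have hik : i < k := Finset.mem_range.mp hi
  have : k - 1 - (k - 1 - i) = i := by omega
  rw [this]

lemma trace_T_comm (M P Q : Matrix (Fin m) (Fin m) ℂ) :
    ((T M P) * Q).trace = (P * (T M Q)).trace := by
  have h1 : ((T M P) * Q).trace = traceRightClm Q (T M P) := rfl
  have h2 : (P * (T M Q)).trace = traceLeftClm P (T M Q) := rfl
  rw [h1, h2]
  unfold T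
  rw [ContinuousLinearMap.map_tsum _ (summable_S M P),
    ContinuousLinearMap.map_tsum _ (summable_S M Q)]
  apply tsum_congr
  intro k
  rw [_root_.map_smul, _root_.map_smul, traceRightClm_apply, traceLeftClm_apply, trace_S_comm]

lemma dot_star_self (z : Fin m → ℂ) :
    dotProduct (star z) z = ((∑ i, Complex.normSq (z i) : ℝ) : ℂ) := by
  unfold dotProduct
  push_cast
  apply Finset.sum_congr rfl
  intro i _
  rw [Pi.star_apply, RCLike.star_def, mul_comm, Complex.mul_conj]

lemma star_vecMul_eq (U : Matrix (Fin m) (Fin m) ℂ) (x : Fin m → ℂ) :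
    Matrix.vecMul (star x) U = star ((star U) *ᵥ x) := by
  rw [Matrix.star_mulVec, Matrix.star_eq_conjTranspose, Matrix.conjTranspose_conjTranspose]

lemma qf_real (H : Matrix (Fin m) (Fin m) ℂ) (hH : H.IsHermitian) (x : Fin m → ℂ) :
    dotProduct (star x) (H *ᵥ x)
      = ((∑ i, hH.eigenvalues i
          * Complex.normSq (((star (hH.eigenvectorUnitary : Matrix (Fin m) (Fin m) ℂ)) *ᵥ x) i) : ℝ) : ℂ) := by
  set U := (hH.eigenvectorUnitary : Matrix (Fin m) (Fin m) ℂ) with hU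
  set y := (star U) *ᵥ x with hy
  conv_lhs => rw [hH.spectral_theorem, Unitary.conjStarAlgAut_apply]
  rw [← Matrix.mulVec_mulVec, ← Matrix.mulVec_mulVec, Matrix.dotProduct_mulVec,
    star_vecMul_eq, ← hy]
  unfold dotProduct
  rw [Complex.ofReal_sum]
  apply Finset.sum_congr rfl
  intro i _
  rw [Matrix.mulVec_diagonal, Pi.star_apply, RCLike.star_def]
  rw [show (starRingEnd ℂ) (y i) * ((RCLike.ofReal ∘ hH.eigenvalues) i * y i)
      = (RCLike.ofReal (hH.eigenvalues i) : ℂ) * (y i * (starRingEnd ℂ) (y i)) by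
    simp only [Function.comp_apply]; ring]
  rw [Complex.mul_conj]
  rw [show (RCLike.ofReal (hH.eigenvalues i) : ℂ) = ((hH.eigenvalues i : ℝ) : ℂ) from rfl]
  rw [← Complex.ofReal_mul]

lemma sum_normSq_unitary {U : Matrix (Fin m) (Fin m) ℂ} (hUV : U * star U = 1)
    (x : Fin m → ℂ) :
    ∑ i, Complex.normSq (((star U) *ᵥ x) i) = ∑ i, Complex.normSq (x i) := by
  have h := dot_star_self ((star U) *ᵥ x)
  rw [← star_vecMul_eq, ← Matrix.dotProduct_mulVec, Matrix.mulVec_mulVec, hUV,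
    Matrix.one_mulVec, dot_star_self x] at h
  exact_mod_cast h.symm

lemma posdef_perturb (B X : Matrix (Fin m) (Fin m) ℂ) (hB : B.PosDef) (hX : X.IsHermitian) :
    ∀ᶠ t : ℝ in 𝓝 0, (B + t • X).PosDef := by
  have hherm : ∀ t : ℝ, (B + t • X).IsHermitian := by
    intro t
    apply hB.1.add
    show (t • X)ᴴ = t • X
    rw [Matrix.conjTranspose_smul, star_trivial, hX]
  rcases Nat.eq_zero_or_pos m with hm | hm
  · apply Filter.Eventually.of_forall
    intro t
    refine Matrix.PosDef.of_dotProduct_mulVec_pos (hherm t) fun x hx => ?_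
    exfalso
    apply hx
    funext i
    exact absurd i.2 (by omega)
  haveI : Nonempty (Fin m) := ⟨⟨0, hm⟩⟩
  set c₀ := Finset.univ.inf' Finset.univ_nonempty hB.1.eigenvalues with hc₀def
  have hc₀ : 0 < c₀ := by
    rw [hc₀def, Finset.lt_inf'_iff]
    exact fun i _ => hB.eigenvalues_pos i
  set CX := ∑ i, |hX.eigenvalues i| with hCXdef
  have hCX0 : 0 ≤ CX := Finset.sum_nonneg fun i _ => abs_nonneg _
  have hδ : (0:ℝ) < c₀ / (CX + 1) := by positivity
  filter_upwards [Metric.ball_mem_nhds (0:ℝ) hδ] with t ht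
  rw [Metric.mem_ball, dist_zero_right, Real.norm_eq_abs] at ht
  refine Matrix.PosDef.of_dotProduct_mulVec_pos (hherm t) fun x hx => ?_
  have hexp : dotProduct (star x) ((B + t • X) *ᵥ x)
      = dotProduct (star x) (B *ᵥ x) + t • dotProduct (star x) (X *ᵥ x) := by
    rw [Matrix.add_mulVec, dotProduct_add, Matrix.smul_mulVec,
      dotProduct_smul]
  set yB := (star (hB.1.eigenvectorUnitary : Matrix (Fin m) (Fin m) ℂ)) *ᵥ x with hyB
  set yX := (star (hX.eigenvectorUnitary : Matrix (Fin m) (Fin m) ℂ)) *ᵥ x with hyX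
  set sB := ∑ i, hB.1.eigenvalues i * Complex.normSq (yB i) with hsBdef
  set sX := ∑ i, hX.eigenvalues i * Complex.normSq (yX i) with hsXdef
  have hq : dotProduct (star x) ((B + t • X) *ᵥ x) = ((sB + t * sX : ℝ) : ℂ) := by
    rw [hexp, qf_real B hB.1 x, qf_real X hX x, Complex.real_smul, ← Complex.ofReal_mul,
      ← Complex.ofReal_add]
  rw [hq]
  rw [show (0 : ℂ) = ((0:ℝ) : ℂ) from rfl, Complex.real_lt_real]
  -- the total mass
  set s := ∑ i, Complex.normSq (x i) with hsdef
  have hs : 0 < s := by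
    have hex : ∃ i, x i ≠ 0 := by
      by_contra h
      push_neg at h
      exact hx (funext h)
    obtain ⟨i0, hi0⟩ := hex
    apply Finset.sum_pos' (fun i _ => Complex.normSq_nonneg _)
    exact ⟨i0, Finset.mem_univ _, Complex.normSq_pos.mpr hi0⟩
  have hUB : (hB.1.eigenvectorUnitary : Matrix (Fin m) (Fin m) ℂ)
      * star (hB.1.eigenvectorUnitary : Matrix (Fin m) (Fin m) ℂ) = 1 :=
    (Matrix.mem_unitaryGroup_iff).mp hB.1.eigenvectorUnitary.2
  have hUX : (hX.eigenvectorUnitary : Matrix (Fin m) (Fin m) ℂ)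
      * star (hX.eigenvectorUnitary : Matrix (Fin m) (Fin m) ℂ) = 1 :=
    (Matrix.mem_unitaryGroup_iff).mp hX.eigenvectorUnitary.2
  have hsumB : ∑ i, Complex.normSq (yB i) = s := sum_normSq_unitary hUB x
  have hsumX : ∑ i, Complex.normSq (yX i) = s := sum_normSq_unitary hUX x
  have hsB : c₀ * s ≤ sB := by
    rw [← hsumB, Finset.mul_sum, hsBdef]
    apply Finset.sum_le_sum
    intro i _
    exact mul_le_mul_of_nonneg_right (Finset.inf'_le _ (Finset.mem_univ i))
      (Complex.normSq_nonneg _)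
  have hsX : |sX| ≤ CX * s := by
    rw [hsXdef]
    calc |∑ i, hX.eigenvalues i * Complex.normSq (yX i)|
        ≤ ∑ i, |hX.eigenvalues i * Complex.normSq (yX i)| := Finset.abs_sum_le_sum_abs _ _
      _ ≤ ∑ i, |hX.eigenvalues i| * s := by
          apply Finset.sum_le_sum
          intro i _
          rw [abs_mul, abs_of_nonneg (Complex.normSq_nonneg _)]
          apply mul_le_mul_of_nonneg_left _ (abs_nonneg _)
          rw [← hsumX]
          exact Finset.single_le_sum (fun j _ => Complex.normSq_nonneg _) (Finset.mem_univ i)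
      _ = CX * s := by rw [← Finset.sum_mul]
  have habs : |t| * (CX + 1) < c₀ := by
    rw [div_eq_mul_inv] at ht
    have h2 := mul_lt_mul_of_pos_right ht (show (0:ℝ) < CX + 1 by positivity)
    rwa [mul_assoc, inv_mul_cancel₀ (by positivity : (CX+1:ℝ) ≠ 0), mul_one] at h2
  have h1 : t * sX ≥ -(|t| * |sX|) := by
    have := neg_abs_le (t * sX)
    rw [abs_mul] at this
    linarith
  nlinarith [abs_nonneg t, mul_le_mul_of_nonneg_left hsX (abs_nonneg t)]

end DlogAux

/-- the map `H ↦ Dlog[B](H)` is self-adjoint for the Hilbert–Schmidt inner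
product: `Tr[A · Dlog[B](X)] = Tr[X · Dlog[B](A)]` for Hermitian `A`, `X` and `B > 0`.
Here `DX = Dlog[B](X)` and `DA = Dlog[B](A)` are characterized by the derivative
hypotheses. -/
theorem dlog_selfAdjoint (n : ℕ) (B A X : Matrix (Fin n) (Fin n) ℂ)
    (hB : B.PosDef) (hA : A.IsHermitian) (hX : X.IsHermitian)
    (DX DA : Matrix (Fin n) (Fin n) ℂ)
    (hDX : HasDerivAt (fun t : ℝ => mlog (B + t • X)) DX 0)
    (hDA : HasDerivAt (fun t : ℝ => mlog (B + t • A)) DA 0) :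
    (A * DX).trace = (X * DA).trace := by
  classical
  set M : Matrix (Fin n) (Fin n) ℂ := mlog B with hMdef
  have key : ∀ (Y DY : Matrix (Fin n) (Fin n) ℂ), Y.IsHermitian →
      HasDerivAt (fun t : ℝ => mlog (B + t • Y)) DY 0 → DlogAux.T M DY = Y := by
    intro Y DY hY hDY
    have hpos := DlogAux.posdef_perturb B Y hB hY
    have hEY : (fun t : ℝ => DlogAux.E (mlog (B + t • Y))) =ᶠ[nhds (0:ℝ)]
        (fun t : ℝ => B + t • Y) := by
      filter_upwards [hpos] with t ht
      have h1 : mlog (B + t • Y) = ht.1.cfc Real.log := dif_pos ht.1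
      rw [h1]
      exact DlogAux.E_cfc_log ht
    have hL0 : mlog (B + (0:ℝ) • Y) = M := by
      rw [hMdef]
      norm_num
    have hE' : HasFDerivAt DlogAux.E (DlogAux.Tclm M) (mlog (B + (0:ℝ) • Y)) := by
      rw [hL0]; exact DlogAux.hasFDerivAt_E M
    have hcomp : HasDerivAt (fun t : ℝ => DlogAux.E (mlog (B + t • Y)))
        (DlogAux.Tclm M DY) 0 := by
      have := hE'.comp_hasDerivAt 0 hDY; exact this
    have hBY : HasDerivAt (fun t : ℝ => B + t • Y) Y 0 := by
      have := ((hasDerivAt_id (0:ℝ)).smul_const Y).const_add B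
      simp only [id, one_smul] at this; exact this
    have h2 : HasDerivAt (fun t : ℝ => B + t • Y) (DlogAux.Tclm M DY) 0 :=
      hcomp.congr_of_eventuallyEq hEY.symm
    have h3 := h2.unique hBY
    rw [← DlogAux.Tclm_apply]
    exact h3
  have hXeq := key X DX hX hDX
  have hAeq := key A DA hA hDA
  calc (A * DX).trace = (DlogAux.T M DA * DX).trace := by rw [hAeq]
    _ = (DA * DlogAux.T M DX).trace := DlogAux.trace_T_comm M DA DX
    _ = (DA * X).trace := by rw [hXeq]
    _ = (X * DA).trace := Matrix.trace_mul_comm _ _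

end
end

section
/- For every positive definite n×n complex matrix B and all Hermitian matrices X and H, Tr[X · Dlog[B](H)] = −∂²/∂s∂t D(B + sX ‖ B + tH)|_{s=t=0}, where the mixed partial derivative is taken of the function (s, t) ↦ D(B + sX ‖ B + tH), defined for |s|, |t| small enough that B + sX and B + tH are positive definite, and the two partial derivatives commute. -/
/-!
Common setup: matrices are `n × n` complex matrices. Functions of Hermitian matrices are
taken via the spectral theorem (functional calculus). Matrix-valued integrals are Bochner
integrals (with respect to the entrywise sup norm; all norms on this finite-dimensional
space are equivalent, so the Bochner integral does not depend on this choice), and the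
directional derivative `Dlog[B](H) = lim_{t→0} (log(B+tH) - log B)/t` is expressed through
`HasDerivAt (fun t => mlog (B + t • H)) · 0`, which asserts both the existence of the limit
and its value.
-/

open MeasureTheory
open scoped ComplexOrder

attribute [local instance] Matrix.normedAddCommGroup Matrix.normedSpace

noncomputable section

variable {n : ℕ}

/-! ### Auxiliary lemmas for the proof -/

section AuxProof
open Matrix

private lemma re_rsmul (a : ℝ) (z : ℂ) : (a • z).re = a * z.re := by
  rw [Complex.real_smul, Complex.re_ofReal_mul]

private lemma hasDerivAt_affine (a b x : ℝ) : HasDerivAt (fun s : ℝ => a + s * b) b x := by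
  simpa using ((hasDerivAt_id x).mul_const b).const_add a

private lemma hasDerivAt_entry {f : ℝ → Matrix (Fin n) (Fin n) ℂ} {F : Matrix (Fin n) (Fin n) ℂ}
    {x : ℝ} (h : HasDerivAt f F x) (i j : Fin n) :
    HasDerivAt (fun t => f t i j) (F i j) x :=
  hasDerivAt_pi.mp (hasDerivAt_pi.mp h i) j

private lemma hasDerivAt_cre {g : ℝ → ℂ} {g' : ℂ} {x : ℝ} (h : HasDerivAt g g' x) :
    HasDerivAt (fun t => (g t).re) g'.re x := by
  exact (Complex.reCLM.hasFDerivAt.comp_hasDerivAt x h)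

private lemma trace_mul_eq (A M : Matrix (Fin n) (Fin n) ℂ) :
    (A * M).trace = ∑ i, ∑ j, A i j * M j i := by
  simp [Matrix.trace, Matrix.mul_apply, Matrix.diag]

private lemma hasDerivAt_re_trace_mul {f : ℝ → Matrix (Fin n) (Fin n) ℂ}
    {F : Matrix (Fin n) (Fin n) ℂ} {x : ℝ} (h : HasDerivAt f F x)
    (A : Matrix (Fin n) (Fin n) ℂ) :
    HasDerivAt (fun t => ((A * f t).trace).re) (((A * F).trace).re) x := by
  have hC : HasDerivAt (fun t => ∑ i, ∑ j, A i j * f t j i) (∑ i, ∑ j, A i j * F j i) x := by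
    apply HasDerivAt.fun_sum; intro i _; apply HasDerivAt.fun_sum; intro j _
    exact (hasDerivAt_entry h j i).const_mul _
  simp only [trace_mul_eq]
  exact hasDerivAt_cre hC

private lemma isHermitian_rsmul {X : Matrix (Fin n) (Fin n) ℂ} (hX : X.IsHermitian) (s : ℝ) :
    (s • X).IsHermitian := by
  show (s • X)ᴴ = s • X
  rw [Matrix.conjTranspose_smul, star_trivial, hX]

private lemma star_quad {M : Matrix (Fin n) (Fin n) ℂ} (hM : M.IsHermitian) (x : Fin n → ℂ) :
    star (dotProduct (star x) (M *ᵥ x)) = dotProduct (star x) (M *ᵥ x) := by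
  rw [← Matrix.star_dotProduct, Matrix.star_mulVec, ← Matrix.dotProduct_mulVec, hM]

private lemma posDef_rsmul {M : Matrix (Fin n) (Fin n) ℂ} (hM : M.PosDef) {a : ℝ} (ha : 0 < a) :
    (a • M).PosDef := by
  refine Matrix.PosDef.of_dotProduct_mulVec_pos (isHermitian_rsmul hM.1 a) fun x hx => ?_
  have h := hM.dotProduct_mulVec_pos hx
  rw [Matrix.smul_mulVec, dotProduct_smul]
  rw [Complex.lt_def] at h ⊢
  rw [Complex.real_smul]
  constructor
  · simpa [Complex.re_ofReal_mul] using mul_pos ha (by simpa using h.1)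
  · simpa [Complex.im_ofReal_mul] using Or.inr h.2.symm

private lemma posdef_convex {M : Matrix (Fin n) (Fin n) ℂ} (hM : M.PosDef) {t : ℝ}
    (h0 : 0 ≤ t) (h1 : t ≤ 1) :
    ((1 : Matrix (Fin n) (Fin n) ℂ) + t • (M - 1)).PosDef := by
  have hrw : (1 : Matrix (Fin n) (Fin n) ℂ) + t • (M - 1)
      = (1 - t) • (1 : Matrix (Fin n) (Fin n) ℂ) + t • M := by module
  rw [hrw]
  rcases eq_or_lt_of_le h0 with h | h
  · simp only [← h, zero_smul, add_zero, sub_zero, one_smul]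
    exact Matrix.PosDef.one
  · rcases eq_or_lt_of_le h1 with h' | h'
    · simp only [h', sub_self, zero_smul, zero_add, one_smul]
      exact hM
    · exact Matrix.PosDef.add (posDef_rsmul Matrix.PosDef.one (by linarith)) (posDef_rsmul hM h)

private lemma continuous_quad (M : Matrix (Fin n) (Fin n) ℂ) :
    Continuous fun x : Fin n → ℂ => (dotProduct (star x) (M *ᵥ x)).re := by
  apply Complex.continuous_re.comp
  simp only [dotProduct, Matrix.mulVec, Pi.star_apply]
  apply continuous_finset_sum; intro i _
  exact ((continuous_apply i).star).mul
    (continuous_finset_sum _ fun j _ => continuous_const.mul (continuous_apply j))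

private lemma quad_scale (M : Matrix (Fin n) (Fin n) ℂ) (y : Fin n → ℂ) (r : ℝ) :
    (dotProduct (star ((r : ℂ) • y)) (M *ᵥ ((r : ℂ) • y))).re
      = r ^ 2 * (dotProduct (star y) (M *ᵥ y)).re := by
  rw [star_smul, Matrix.mulVec_smul, smul_dotProduct, dotProduct_smul]
  simp only [smul_smul, smul_eq_mul, Complex.star_def, Complex.conj_ofReal]
  rw [Complex.re_ofReal_mul, Complex.re_ofReal_mul]
  ring

private lemma quad_add_smul (B X : Matrix (Fin n) (Fin n) ℂ) (s : ℝ) (x : Fin n → ℂ) :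
    (dotProduct (star x) ((B + s • X) *ᵥ x)).re
      = (dotProduct (star x) (B *ᵥ x)).re
        + s * (dotProduct (star x) (X *ᵥ x)).re := by
  rw [Matrix.add_mulVec, dotProduct_add, Matrix.smul_mulVec,
    dotProduct_smul, Complex.add_re, Complex.real_smul, Complex.re_ofReal_mul]

private lemma exists_posdef_nbhd (B X : Matrix (Fin n) (Fin n) ℂ)
    (hB : B.PosDef) (hX : X.IsHermitian) :
    ∃ δ : ℝ, 0 < δ ∧ ∀ s : ℝ, |s| ≤ δ → (B + s • X).PosDef := by
  rcases Nat.eq_zero_or_pos n with hn | hn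
  · subst hn
    exact ⟨1, one_pos, fun s _ =>
      ⟨hB.1.add (isHermitian_rsmul hX s), fun x hx => absurd (Subsingleton.elim x 0) hx⟩⟩
  haveI : Nonempty (Fin n) := ⟨⟨0, hn⟩⟩
  set S : Set (Fin n → ℂ) := Metric.sphere 0 1 with hSdef
  have hS : IsCompact S := isCompact_sphere 0 1
  have hSne : S.Nonempty := ⟨fun _ => 1, by simp [hSdef, pi_norm_const]⟩
  obtain ⟨x₀, hx₀, hmin⟩ := hS.exists_isMinOn hSne (continuous_quad B).continuousOn
  obtain ⟨x₁, hx₁, hmax⟩ := hS.exists_isMaxOn hSne ((continuous_quad X).abs).continuousOn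
  set c := (dotProduct (star x₀) (B *ᵥ x₀)).re with hcdef
  set C := |(dotProduct (star x₁) (X *ᵥ x₁)).re| with hCdef
  have hC0 : 0 ≤ C := abs_nonneg _
  have hx₀ne : x₀ ≠ 0 := by
    intro h
    rw [hSdef] at hx₀
    rw [mem_sphere_zero_iff_norm, h, norm_zero] at hx₀
    norm_num at hx₀
  have hcpos : 0 < c := by
    have := hB.re_dotProduct_pos hx₀ne
    simpa [hcdef, RCLike.re_to_complex] using this
  refine ⟨c / (2 * (C + 1)), by positivity, fun s hs => ?_⟩
  have hsC : |s| * C ≤ c / 2 := by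
    have h2 : |s| * (2 * (C + 1)) ≤ c := by
      have := (le_div_iff₀ (by positivity : (0:ℝ) < 2 * (C + 1))).mp hs
      linarith
    nlinarith [abs_nonneg s]
  have hherm : (B + s • X).IsHermitian := hB.1.add (isHermitian_rsmul hX s)
  refine Matrix.PosDef.of_dotProduct_mulVec_pos hherm fun x hx => ?_
  have him : (dotProduct (star x) ((B + s • X) *ᵥ x)).im = 0 := by
    have := star_quad hherm x
    rw [Complex.star_def, Complex.conj_eq_iff_im] at this
    exact this
  set r := ‖x‖ with hrdef
  have hr : 0 < r := by
    rw [hrdef]; exact norm_pos_iff.mpr hx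
  set y : Fin n → ℂ := ((r : ℂ))⁻¹ • x with hydef
  have hxy : x = (r : ℂ) • y := by
    rw [hydef, smul_smul, mul_inv_cancel₀ (Complex.ofReal_ne_zero.mpr hr.ne'), one_smul]
  have hy : y ∈ S := by
    rw [hSdef, mem_sphere_zero_iff_norm, hydef, norm_smul]
    rw [norm_inv, Complex.norm_real, Real.norm_eq_abs, abs_of_pos hr]
    field_simp
    exact hrdef.symm
  have hyB : c ≤ (dotProduct (star y) (B *ᵥ y)).re := hmin hy
  have hyX : |(dotProduct (star y) (X *ᵥ y)).re| ≤ C := hmax hy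
  have hre : 0 < (dotProduct (star x) ((B + s • X) *ᵥ x)).re := by
    rw [quad_add_smul, hxy, quad_scale, quad_scale]
    have h1 : s * (dotProduct (star y) (X *ᵥ y)).re ≥ -(c / 2) := by
      have habs : |s * (dotProduct (star y) (X *ᵥ y)).re| ≤ |s| * C := by
        rw [abs_mul]
        exact mul_le_mul_of_nonneg_left hyX (abs_nonneg s)
      have h3 := (abs_le.mp (habs.trans hsC)).1
      linarith
    have hr2 : 0 < r ^ 2 := by positivity
    calc (0:ℝ) < r ^ 2 * (c / 2) := by positivity
    _ ≤ r ^ 2 * ((dotProduct (star y) (B *ᵥ y)).re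
          + s * (dotProduct (star y) (X *ᵥ y)).re) := by
        apply mul_le_mul_of_nonneg_left _ hr2.le
        linarith
    _ = r ^ 2 * (dotProduct (star y) (B *ᵥ y)).re
          + s * (r ^ 2 * (dotProduct (star y) (X *ᵥ y)).re) := by ring
  rw [Complex.lt_def]
  exact ⟨by simpa using hre, by simpa using him.symm⟩

/-- Conjugation of a real diagonal matrix by a fixed matrix. -/
private def conjR (U : Matrix (Fin n) (Fin n) ℂ) (v : Fin n → ℝ) : Matrix (Fin n) (Fin n) ℂ :=
  U * Matrix.diagonal (fun i => (v i : ℂ)) * star U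

variable {U : Matrix (Fin n) (Fin n) ℂ}

private lemma conjR_mul (hU : star U * U = 1) (v w : Fin n → ℝ) :
    conjR U v * conjR U w = conjR U (v * w) := by
  unfold conjR
  have h : U * Matrix.diagonal (fun i => (v i : ℂ)) * star U *
      (U * Matrix.diagonal (fun i => (w i : ℂ)) * star U)
      = U * (Matrix.diagonal (fun i => (v i : ℂ)) * (star U * U) *
          Matrix.diagonal (fun i => (w i : ℂ))) * star U := by
    simp only [Matrix.mul_assoc]
  rw [h, hU, Matrix.mul_one, Matrix.diagonal_mul_diagonal]
  congr 2
  ext i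
  simp

private lemma conjR_add (v w : Fin n → ℝ) :
    conjR U (v + w) = conjR U v + conjR U w := by
  unfold conjR
  have h : Matrix.diagonal (fun i => ((v + w) i : ℂ))
      = Matrix.diagonal (fun i => (v i : ℂ)) + Matrix.diagonal (fun i => (w i : ℂ)) := by
    ext i j
    by_cases h : i = j <;> simp [Matrix.diagonal_apply, h]
  rw [h, Matrix.mul_add, Matrix.add_mul]

private lemma conjR_sub (v w : Fin n → ℝ) :
    conjR U (v - w) = conjR U v - conjR U w := by
  unfold conjR
  have h : Matrix.diagonal (fun i => ((v - w) i : ℂ))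
      = Matrix.diagonal (fun i => (v i : ℂ)) - Matrix.diagonal (fun i => (w i : ℂ)) := by
    ext i j
    by_cases h : i = j <;> simp [Matrix.diagonal_apply, h]
  rw [h, Matrix.mul_sub, Matrix.sub_mul]

private lemma conjR_smul (t : ℝ) (v : Fin n → ℝ) :
    t • conjR U v = conjR U (t • v) := by
  unfold conjR
  have h : Matrix.diagonal (fun i => ((t • v) i : ℂ))
      = t • Matrix.diagonal (fun i => (v i : ℂ)) := by
    ext i j
    by_cases h : i = j <;> simp [Matrix.diagonal_apply, h, Complex.real_smul]
  rw [h, ← smul_mul_assoc, ← mul_smul_comm]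

private lemma conjR_one (hU' : U * star U = 1) : conjR U 1 = 1 := by
  unfold conjR
  have h : Matrix.diagonal (fun i : Fin n => ((1 : Fin n → ℝ) i : ℂ)) = 1 := by
    simp [Matrix.diagonal_one]
  rw [h, Matrix.mul_one, hU']

private lemma trace_conjR (hU : star U * U = 1) (v : Fin n → ℝ) :
    (conjR U v).trace = ((∑ i, v i : ℝ) : ℂ) := by
  unfold conjR
  rw [Matrix.trace_mul_cycle, hU, Matrix.one_mul, Matrix.trace_diagonal]
  push_cast
  rfl

private lemma conjR_inv (hU : star U * U = 1) (hU' : U * star U = 1) (v : Fin n → ℝ)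
    (hv : ∀ i, v i ≠ 0) : (conjR U v)⁻¹ = conjR U v⁻¹ := by
  apply Matrix.inv_eq_right_inv
  rw [conjR_mul hU]
  have h : v * v⁻¹ = 1 := by
    ext i
    simp [mul_inv_cancel₀ (hv i)]
  rw [h, conjR_one hU']

private lemma spec_conjR {M : Matrix (Fin n) (Fin n) ℂ} (hM : M.IsHermitian) :
    M = conjR (hM.eigenvectorUnitary : Matrix (Fin n) (Fin n) ℂ) hM.eigenvalues := by
  conv_lhs => rw [hM.spectral_theorem]
  rfl

private lemma cfc_conjR {M : Matrix (Fin n) (Fin n) ℂ} (hM : M.IsHermitian) (f : ℝ → ℝ) :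
    hM.cfc f = conjR (hM.eigenvectorUnitary : Matrix (Fin n) (Fin n) ℂ)
      (fun i => f (hM.eigenvalues i)) := rfl

private lemma unitary_left {M : Matrix (Fin n) (Fin n) ℂ} (hM : M.IsHermitian) :
    star (hM.eigenvectorUnitary : Matrix (Fin n) (Fin n) ℂ)
      * (hM.eigenvectorUnitary : Matrix (Fin n) (Fin n) ℂ) = 1 :=
  Matrix.mem_unitaryGroup_iff'.mp (hM.eigenvectorUnitary).2

private lemma unitary_right {M : Matrix (Fin n) (Fin n) ℂ} (hM : M.IsHermitian) :
    (hM.eigenvectorUnitary : Matrix (Fin n) (Fin n) ℂ)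
      * star (hM.eigenvectorUnitary : Matrix (Fin n) (Fin n) ℂ) = 1 :=
  Matrix.mem_unitaryGroup_iff.mp (hM.eigenvectorUnitary).2

private lemma den_pos {l t : ℝ} (hl : 0 < l) (h0 : 0 ≤ t) (h1 : t ≤ 1) :
    0 < 1 + t * (l - 1) := by
  rcases lt_or_ge t 1 with h | h
  · nlinarith [mul_nonneg h0 hl.le]
  · have ht : t = 1 := le_antisymm h1 h
    subst ht; nlinarith

private lemma S1 {l : ℝ} (hl : 0 < l) :
    (∫ t in (0:ℝ)..1, l * (l - 1) * (1 + t * (l - 1))⁻¹) = l * Real.log l := by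
  have hpos : ∀ t ∈ Set.uIcc (0:ℝ) 1, 0 < 1 + t * (l - 1) := by
    intro t ht
    rw [Set.uIcc_of_le zero_le_one] at ht
    exact den_pos hl ht.1 ht.2
  have hderiv : ∀ t ∈ Set.uIcc (0:ℝ) 1,
      HasDerivAt (fun u : ℝ => l * Real.log (1 + u * (l - 1)))
        (l * (l - 1) * (1 + t * (l - 1))⁻¹) t := by
    intro t ht
    have h1 : HasDerivAt (fun u : ℝ => 1 + u * (l - 1)) (l - 1) t := by
      simpa using ((hasDerivAt_id t).mul_const (l - 1)).const_add 1
    have h2 := (Real.hasDerivAt_log (hpos t ht).ne').comp t h1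
    have h3 := h2.const_mul l
    exact h3.congr_deriv (by ring)
  have hint : IntervalIntegrable (fun t : ℝ => l * (l - 1) * (1 + t * (l - 1))⁻¹)
      MeasureTheory.volume 0 1 := by
    apply ContinuousOn.intervalIntegrable
    apply ContinuousOn.mul continuousOn_const
    exact ContinuousOn.inv₀
      ((continuous_const.add (continuous_id.mul continuous_const)).continuousOn)
      (fun t ht => (hpos t ht).ne')
  rw [intervalIntegral.integral_eq_sub_of_hasDerivAt hderiv hint]
  simp only [one_mul, zero_mul, add_zero]
  rw [show (1:ℝ) + (l - 1) = l by ring]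
  simp

private lemma rep (M : Matrix (Fin n) (Fin n) ℂ) (hM : M.PosDef) :
    ((mfun (fun x => x * Real.log x) M).trace).re
      = ∫ t in (0:ℝ)..1,
          ((M * (M - 1) * ((1 : Matrix (Fin n) (Fin n) ℂ) + t • (M - 1))⁻¹).trace).re := by
  have hherm := hM.1
  set U := (hherm.eigenvectorUnitary : Matrix (Fin n) (Fin n) ℂ) with hUdef
  have hU : star U * U = 1 := unitary_left hherm
  have hU' : U * star U = 1 := unitary_right hherm
  set lam := hherm.eigenvalues with hlam
  have hMe : M = conjR U lam := spec_conjR hherm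
  have hpos : ∀ i, 0 < lam i := fun i => hM.eigenvalues_pos i
  have hL : ((mfun (fun x => x * Real.log x) M).trace).re
      = ∑ i, lam i * Real.log (lam i) := by
    unfold mfun
    rw [dif_pos hherm, cfc_conjR hherm, trace_conjR hU, Complex.ofReal_re]
  have key : Set.EqOn
      (fun t : ℝ => ((M * (M - 1)
          * ((1 : Matrix (Fin n) (Fin n) ℂ) + t • (M - 1))⁻¹).trace).re)
      (fun t : ℝ => ∑ i, lam i * (lam i - 1) * (1 + t * (lam i - 1))⁻¹)
      (Set.uIcc (0:ℝ) 1) := by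
    intro t ht
    rw [Set.uIcc_of_le zero_le_one] at ht
    have hd : ∀ i, 1 + t * (lam i - 1) ≠ 0 := fun i => (den_pos (hpos i) ht.1 ht.2).ne'
    have e1 : M - 1 = conjR U (lam - 1) := by rw [conjR_sub, ← hMe, conjR_one hU']
    have e2 : (1 : Matrix (Fin n) (Fin n) ℂ) + t • (M - 1)
        = conjR U (fun i => 1 + t * (lam i - 1)) := by
      have h3 : (fun i => 1 + t * (lam i - 1)) = (1 : Fin n → ℝ) + t • (lam - 1) := by
        funext i
        simp [Pi.smul_apply]
      rw [h3, conjR_add, ← conjR_smul, conjR_one hU', e1]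
    show ((M * (M - 1) * ((1 : Matrix (Fin n) (Fin n) ℂ) + t • (M - 1))⁻¹).trace).re = _
    rw [e2, e1, hMe, conjR_inv hU hU' _ hd, conjR_mul hU, conjR_mul hU, trace_conjR hU,
      Complex.ofReal_re]
    apply Finset.sum_congr rfl
    intro i _
    simp [Pi.mul_apply, Pi.inv_apply, Pi.sub_apply, Pi.one_apply]
  rw [intervalIntegral.integral_congr key, intervalIntegral.integral_finset_sum, hL]
  · exact Finset.sum_congr rfl fun i _ => (S1 (hpos i)).symm
  · intro i _
    apply ContinuousOn.intervalIntegrable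
    apply ContinuousOn.mul continuousOn_const
    exact ContinuousOn.inv₀
      ((continuous_const.add (continuous_id.mul continuous_const)).continuousOn)
      (fun t ht => (den_pos (hpos i) (by rw [Set.uIcc_of_le zero_le_one] at ht; exact ht.1)
        (by rw [Set.uIcc_of_le zero_le_one] at ht; exact ht.2)).ne')

private def Qm (B X : Matrix (Fin n) (Fin n) ℂ) (p : ℝ × ℝ) : Matrix (Fin n) (Fin n) ℂ :=
  1 + p.2 • (B + p.1 • X - 1)

private def wf (B X : Matrix (Fin n) (Fin n) ℂ) (p : ℝ × ℝ) : ℝ :=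
  (((B + p.1 • X) * (B + p.1 • X - 1) * (Qm B X p)⁻¹).trace).re

private def Gf (B X : Matrix (Fin n) (Fin n) ℂ) (p : ℝ × ℝ) : ℝ :=
  (((X * (B - 1) + B * X) * (Qm B X (0, p.2))⁻¹
      + p.1 • (X * X * (Qm B X (0, p.2))⁻¹)
      - p.2 • ((B + p.1 • X) * (B + p.1 • X - 1) * (Qm B X p)⁻¹ * X
          * (Qm B X (0, p.2))⁻¹)).trace).re

private lemma wf_eq (B X : Matrix (Fin n) (Fin n) ℂ) (p : ℝ × ℝ)
    (hQ : IsUnit (Qm B X p).det) (hP : IsUnit (Qm B X (0, p.2)).det) :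
    wf B X p = wf B X (0, p.2) + p.1 * Gf B X p := by
  obtain ⟨s, t⟩ := p
  simp only [Qm, wf, Gf, zero_smul, add_zero] at hQ hP ⊢
  set P : Matrix (Fin n) (Fin n) ℂ := 1 + t • (B - 1) with hPdef
  set Qp : Matrix (Fin n) (Fin n) ℂ := 1 + t • (B + s • X - 1) with hQdef
  have hQP : Qp = P + (t * s) • X := by rw [hQdef, hPdef]; module
  have hPQ : P = Qp - (t * s) • X := by rw [hQP]; abel
  have hV : Qp⁻¹ = P⁻¹ - (t * s) • (Qp⁻¹ * X * P⁻¹) := by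
    calc Qp⁻¹ = Qp⁻¹ * (P * P⁻¹) := by rw [Matrix.mul_nonsing_inv _ hP, mul_one]
    _ = Qp⁻¹ * (Qp - (t * s) • X) * P⁻¹ := by rw [← hPQ, Matrix.mul_assoc]
    _ = (1 - (t * s) • (Qp⁻¹ * X)) * P⁻¹ := by
        rw [mul_sub, Matrix.nonsing_inv_mul _ hQ, mul_smul_comm]
    _ = P⁻¹ - (t * s) • (Qp⁻¹ * X * P⁻¹) := by
        rw [sub_mul, one_mul, smul_mul_assoc]
  have hmat : (B + s • X) * (B + s • X - 1) * Qp⁻¹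
      = B * (B - 1) * P⁻¹
        + s • ((X * (B - 1) + B * X) * P⁻¹ + s • (X * X * P⁻¹)
            - t • ((B + s • X) * (B + s • X - 1) * Qp⁻¹ * X * P⁻¹)) := by
    conv_lhs => rw [hV]
    simp only [mul_sub, sub_mul, mul_add, add_mul, smul_mul_assoc, mul_smul_comm,
      mul_assoc, smul_smul, one_mul, mul_one, smul_sub, smul_add]
    module
  have htr := congrArg (fun A : Matrix (Fin n) (Fin n) ℂ => (A.trace).re) hmat
  simp only [Matrix.trace_add, Matrix.trace_sub, Matrix.trace_smul, Complex.add_re,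
    Complex.sub_re, re_rsmul] at htr ⊢
  linear_combination htr

end AuxProof
section CoreProof
open Matrix Filter MeasureTheory

private lemma core (B X : Matrix (Fin n) (Fin n) ℂ) (hB : B.PosDef) (hX : X.IsHermitian) :
    ∃ c : ℝ, HasDerivAt
      (fun s : ℝ => ((mfun (fun x => x * Real.log x) (B + s • X)).trace).re) c 0 := by
  obtain ⟨δ, hδ, hpd⟩ := exists_posdef_nbhd B X hB hX
  set K : Set (ℝ × ℝ) := Set.Icc (-δ) δ ×ˢ Set.Icc (0:ℝ) 1 with hK
  have hKmem : ∀ s t : ℝ, |s| ≤ δ → t ∈ Set.Icc (0:ℝ) 1 → ((s, t) : ℝ × ℝ) ∈ K := by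
    intro s t hs ht
    exact Set.mem_prod.mpr ⟨Set.mem_Icc.mpr (abs_le.mp hs), ht⟩
  have hKabs : ∀ p : ℝ × ℝ, p ∈ K → |p.1| ≤ δ ∧ p.2 ∈ Set.Icc (0:ℝ) 1 := by
    intro p hp
    obtain ⟨h1, h2⟩ := Set.mem_prod.mp hp
    exact ⟨abs_le.mpr (Set.mem_Icc.mp h1), h2⟩
  have hKc : IsCompact K := isCompact_Icc.prod isCompact_Icc
  have hQpos : ∀ p ∈ K, (Qm B X p).PosDef := by
    intro p hp
    obtain ⟨h1, h2⟩ := hKabs p hp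
    exact posdef_convex (hpd p.1 h1) h2.1 h2.2
  have hQdet : ∀ p ∈ K, (Qm B X p).det ≠ 0 := fun p hp => ((hQpos p hp).det_pos).ne'
  have hQu : ∀ p ∈ K, IsUnit (Qm B X p).det := fun p hp => isUnit_iff_ne_zero.mpr (hQdet p hp)
  have h0K : ∀ p : ℝ × ℝ, p ∈ K → (((0:ℝ), p.2) : ℝ × ℝ) ∈ K := by
    intro p hp
    exact hKmem 0 p.2 (by simpa using hδ.le) (hKabs p hp).2
  -- continuity facts
  have hQcont : Continuous (Qm B X) := by
    unfold Qm
    exact continuous_const.add (continuous_snd.smul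
      ((continuous_const.add (continuous_fst.smul continuous_const)).sub continuous_const))
  have hQinv : ContinuousOn (fun p => (Qm B X p)⁻¹) K := by
    have h1 : (fun p => (Qm B X p)⁻¹)
        = fun p => (Ring.inverse (Qm B X p).det) • (Qm B X p).adjugate := by
      funext p; exact Matrix.inv_def _
    rw [h1]
    simp only [Ring.inverse_eq_inv']
    exact (ContinuousOn.inv₀ (hQcont.matrix_det).continuousOn hQdet).smul
      (hQcont.matrix_adjugate).continuousOn
  have hφ0 : Continuous (fun p : ℝ × ℝ => (((0:ℝ), p.2) : ℝ × ℝ)) :=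
    continuous_const.prodMk continuous_snd
  have hQinv0 : ContinuousOn (fun p : ℝ × ℝ => (Qm B X ((0:ℝ), p.2))⁻¹) K :=
    hQinv.comp hφ0.continuousOn h0K
  have hAs : Continuous (fun p : ℝ × ℝ => B + p.1 • X) :=
    continuous_const.add (continuous_fst.smul continuous_const)
  have htrre : Continuous (fun M : Matrix (Fin n) (Fin n) ℂ => (M.trace).re) :=
    Complex.continuous_re.comp (continuous_id.matrix_trace)
  have hw_cont : ContinuousOn (wf B X) K := by
    unfold wf
    apply htrre.comp_continuousOn
    exact (hAs.continuousOn.mul ((hAs.sub continuous_const).continuousOn)).mul hQinv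
  have hG_cont : ContinuousOn (Gf B X) K := by
    unfold Gf
    apply htrre.comp_continuousOn
    refine ContinuousOn.sub (ContinuousOn.add ?_ ?_) ?_
    · exact continuousOn_const.mul hQinv0
    · exact (continuous_fst.continuousOn).smul (continuousOn_const.mul hQinv0)
    · exact (continuous_snd.continuousOn).smul
        (((((hAs.continuousOn.mul ((hAs.sub continuous_const).continuousOn)).mul hQinv).mul
          continuousOn_const).mul hQinv0))
  obtain ⟨C, hC⟩ := hKc.exists_bound_of_continuousOn hG_cont
  set Φ : ℝ → ℝ := fun s => ∫ t in (0:ℝ)..1, Gf B X (s, t) with hΦ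
  have hIcc : Set.uIcc (0:ℝ) 1 = Set.Icc 0 1 := Set.uIcc_of_le zero_le_one
  have h00 : |(0:ℝ)| ≤ δ := by simpa using hδ.le
  have hGsc : ∀ s : ℝ, |s| ≤ δ → ContinuousOn (fun t => Gf B X (s, t)) (Set.Icc (0:ℝ) 1) := by
    intro s hs
    apply hG_cont.comp (Continuous.continuousOn (continuous_const.prodMk continuous_id))
    intro t ht
    exact hKmem s t hs ht
  have hwsc : ∀ s : ℝ, |s| ≤ δ → ContinuousOn (fun t => wf B X (s, t)) (Set.Icc (0:ℝ) 1) := by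
    intro s hs
    apply hw_cont.comp (Continuous.continuousOn (continuous_const.prodMk continuous_id))
    intro t ht
    exact hKmem s t hs ht
  have hGint : ∀ s : ℝ, |s| ≤ δ →
      IntervalIntegrable (fun t => Gf B X (s, t)) MeasureTheory.volume 0 1 := by
    intro s hs
    exact ContinuousOn.intervalIntegrable (by rw [hIcc]; exact hGsc s hs)
  have hwint : IntervalIntegrable (fun t => wf B X (0, t)) MeasureTheory.volume 0 1 :=
    ContinuousOn.intervalIntegrable (by rw [hIcc]; exact hwsc 0 h00)
  have hrep : ∀ s : ℝ, |s| ≤ δ →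
      ((mfun (fun x => x * Real.log x) (B + s • X)).trace).re
        = ∫ t in (0:ℝ)..1, wf B X (s, t) := by
    intro s hs
    rw [show (fun t : ℝ => wf B X (s, t))
        = (fun t : ℝ => (((B + s • X) * ((B + s • X) - 1)
            * ((1 : Matrix (Fin n) (Fin n) ℂ) + t • ((B + s • X) - 1))⁻¹).trace).re) from rfl]
    exact rep (B + s • X) (hpd s hs)
  have hsplit : ∀ s : ℝ, |s| ≤ δ → (∫ t in (0:ℝ)..1, wf B X (s, t))
      = (∫ t in (0:ℝ)..1, wf B X (0, t)) + s * Φ s := by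
    intro s hs
    have heq : Set.EqOn (fun t => wf B X (s, t))
        (fun t => wf B X (0, t) + s * Gf B X (s, t)) (Set.uIcc (0:ℝ) 1) := by
      intro t ht
      rw [hIcc] at ht
      exact wf_eq B X (s, t) (hQu _ (hKmem s t hs ht)) (hQu _ (hKmem 0 t h00 ht))
    rw [intervalIntegral.integral_congr heq,
      intervalIntegral.integral_add hwint ((hGint s hs).const_mul s),
      intervalIntegral.integral_const_mul]
  have hΦtend : Tendsto Φ (nhds 0) (nhds (Φ 0)) := by
    have hnhds : Set.Icc (-δ) δ ∈ nhds (0:ℝ) := Icc_mem_nhds (by linarith) hδ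
    have hmeas : ∀ᶠ s in nhds (0:ℝ), AEStronglyMeasurable (fun t => Gf B X (s, t))
        (MeasureTheory.volume.restrict (Set.Ioc (0:ℝ) 1)) := by
      filter_upwards [hnhds] with s hs
      exact ((hGsc s (abs_le.mpr (Set.mem_Icc.mp hs))).mono
        Set.Ioc_subset_Icc_self).aestronglyMeasurable measurableSet_Ioc
    have hbound : ∀ᶠ s in nhds (0:ℝ),
        ∀ᵐ t ∂(MeasureTheory.volume.restrict (Set.Ioc (0:ℝ) 1)), ‖Gf B X (s, t)‖ ≤ C := by
      filter_upwards [hnhds] with s hs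
      refine (MeasureTheory.ae_restrict_iff' measurableSet_Ioc).2
        (Filter.Eventually.of_forall fun t ht => ?_)
      exact hC (s, t) (hKmem s t (abs_le.mpr (Set.mem_Icc.mp hs)) (Set.Ioc_subset_Icc_self ht))
    have hbint : MeasureTheory.Integrable (fun _ : ℝ => C)
        (MeasureTheory.volume.restrict (Set.Ioc (0:ℝ) 1)) :=
      (MeasureTheory.integrableOn_const_iff).mpr (Or.inr measure_Ioc_lt_top)
    have hlim : ∀ᵐ t ∂(MeasureTheory.volume.restrict (Set.Ioc (0:ℝ) 1)),
        Tendsto (fun s => Gf B X (s, t)) (nhds 0) (nhds (Gf B X (0, t))) := by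
      refine (MeasureTheory.ae_restrict_iff' measurableSet_Ioc).2
        (Filter.Eventually.of_forall fun t ht => ?_)
      have ht' := Set.Ioc_subset_Icc_self ht
      have hcs : ContinuousOn (fun s => Gf B X (s, t)) (Set.Icc (-δ) δ) := by
        apply hG_cont.comp (Continuous.continuousOn (continuous_id.prodMk continuous_const))
        intro s hs
        exact hKmem s t (abs_le.mpr (Set.mem_Icc.mp hs)) ht'
      exact (hcs.continuousAt hnhds).tendsto
    have hDCT := MeasureTheory.tendsto_integral_filter_of_dominated_convergence
      (μ := MeasureTheory.volume.restrict (Set.Ioc (0:ℝ) 1)) (bound := fun _ => C)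
      hmeas hbound hbint hlim
    have hΦeq : Φ = fun s => ∫ t in Set.Ioc (0:ℝ) 1, Gf B X (s, t) ∂MeasureTheory.volume :=
      funext fun s => intervalIntegral.integral_of_le zero_le_one
    rw [hΦeq]
    exact hDCT
  refine ⟨Φ 0, ?_⟩
  rw [hasDerivAt_iff_tendsto_slope]
  have hev : slope (fun s : ℝ => ((mfun (fun x => x * Real.log x) (B + s • X)).trace).re) 0
      =ᶠ[nhdsWithin (0:ℝ) {(0:ℝ)}ᶜ] Φ := by
    have h1 : ∀ᶠ s in nhdsWithin (0:ℝ) {(0:ℝ)}ᶜ, s ∈ Set.Icc (-δ) δ :=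
      Filter.Eventually.filter_mono nhdsWithin_le_nhds (Icc_mem_nhds (by linarith) hδ)
    filter_upwards [h1, eventually_mem_nhdsWithin] with s hs hs0
    have hsd : |s| ≤ δ := abs_le.mpr (Set.mem_Icc.mp hs)
    have hsne : s ≠ 0 := hs0
    rw [slope_def_field, hrep s hsd, hrep 0 h00, hsplit s hsd]
    field_simp
    ring
  rw [Filter.tendsto_congr' hev]
  exact hΦtend.mono_left nhdsWithin_le_nhds

end CoreProof
section FinalGlue
open Matrix

private lemma relEnt_eq (A M : Matrix (Fin n) (Fin n) ℂ) :
    relEnt A M = ((mfun (fun x => x * Real.log x) A).trace).re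
      - ((A * mlog M).trace).re + (M.trace).re - (A.trace).re := by
  simp [relEnt, Matrix.trace_add, Matrix.trace_sub, Complex.add_re, Complex.sub_re]

private lemma trace_lin (B X DH : Matrix (Fin n) (Fin n) ℂ) (s : ℝ) :
    (((B + s • X) * DH).trace).re = ((B * DH).trace).re + s * ((X * DH).trace).re := by
  rw [Matrix.add_mul, smul_mul_assoc, Matrix.trace_add, Matrix.trace_smul, Complex.add_re,
    re_rsmul]

private lemma trace_add_smul_re (B H : Matrix (Fin n) (Fin n) ℂ) (t : ℝ) :
    ((B + t • H).trace).re = (B.trace).re + t * (H.trace).re := by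
  rw [Matrix.trace_add, Matrix.trace_smul, Complex.add_re, re_rsmul]

end FinalGlue

/-- `Tr[X · Dlog[B](H)] = -∂²/∂s∂t D(B + sX‖B + tH)|_{s=t=0}`, where the
mixed partial derivatives in either order exist and commute.  The inner partial derivative is
recorded by a function `g` together with `HasDerivAt` facts; `DH = Dlog[B](H)` is
characterized by `hDH`. -/
theorem trace_dlog_eq_mixed_partial (n : ℕ) (B X H : Matrix (Fin n) (Fin n) ℂ)
    (hB : B.PosDef) (hX : X.IsHermitian) (hH : H.IsHermitian)
    (DH : Matrix (Fin n) (Fin n) ℂ)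
    (hDH : HasDerivAt (fun t : ℝ => mlog (B + t • H)) DH 0) :
    (∃ g : ℝ → ℝ,
      (∀ s : ℝ, HasDerivAt (fun t : ℝ => relEnt (B + s • X) (B + t • H)) (g s) 0) ∧
        HasDerivAt g (-((X * DH).trace).re) 0) ∧
    (∃ g : ℝ → ℝ,
      (∀ t : ℝ, HasDerivAt (fun s : ℝ => relEnt (B + s • X) (B + t • H)) (g t) 0) ∧
        HasDerivAt g (-((X * DH).trace).re) 0) := by
  constructor
  · refine ⟨fun s => (H.trace).re - (((B + s • X) * DH).trace).re, fun s => ?_, ?_⟩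
    · have h1 : HasDerivAt
          (fun t : ℝ => (((B + s • X) * mlog (B + t • H)).trace).re)
          ((((B + s • X) * DH).trace).re) 0 := hasDerivAt_re_trace_mul hDH (B + s • X)
      have h2 : HasDerivAt (fun t : ℝ => ((B + t • H).trace).re) ((H.trace).re) 0 := by
        simp only [trace_add_smul_re]
        simpa using hasDerivAt_affine ((B.trace).re) ((H.trace).re) 0
      have h3 := (((hasDerivAt_const (0:ℝ)
          (((mfun (fun x => x * Real.log x) (B + s • X)).trace).re)).sub h1).add h2).sub
          (hasDerivAt_const (0:ℝ) (((B + s • X).trace).re))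
      simp only [relEnt_eq]
      exact h3.congr_deriv (by ring)
    · simp only [trace_lin]
      exact (hasDerivAt_affine (((B * DH).trace).re) (((X * DH).trace).re) 0).const_sub
        ((H.trace).re)
  · obtain ⟨c, hc⟩ := core B X hB hX
    refine ⟨fun t => c - ((X * mlog (B + t • H)).trace).re - (X.trace).re, fun t => ?_, ?_⟩
    · have h1 : HasDerivAt (fun s : ℝ => (((B + s • X) * mlog (B + t • H)).trace).re)
          (((X * mlog (B + t • H)).trace).re) 0 := by
        simp only [trace_lin]
        simpa using hasDerivAt_affine (((B * mlog (B + t • H)).trace).re)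
          (((X * mlog (B + t • H)).trace).re) 0
      have h2 : HasDerivAt (fun s : ℝ => ((B + s • X).trace).re) ((X.trace).re) 0 := by
        simp only [trace_add_smul_re]
        simpa using hasDerivAt_affine ((B.trace).re) ((X.trace).re) 0
      have h3 := ((hc.sub h1).add
          (hasDerivAt_const (0:ℝ) (((B + t • H).trace).re))).sub h2
      simp only [relEnt_eq]
      exact h3.congr_deriv (by ring)
    · have h1 : HasDerivAt (fun t : ℝ => ((X * mlog (B + t • H)).trace).re)
          (((X * DH).trace).re) 0 := hasDerivAt_re_trace_mul hDH X
      exact (h1.const_sub c).sub_const ((X.trace).re)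

end
end
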